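/- arXiv:2604.21551 — 7 statements merged into one kernel-verified Lean document; each statement's English description precedes it below -/
import Mathlib

section
/- Let F be a forest on k vertices and let H be a Berge-F-free r-uniform hypergraph. Then H contains a vertex u with degree d(u) ≤ C(k-2, r-1) + k - 1, where d(u) is the number of hyperedges containing u. -/
/-- The hypergraph `H` contains a Berge copy of the graph `F`: an injection `φ` of the vertices
of `F` and an injection `f` of the edges of `F` into hyperedges of `H` such that the image of
each edge `e` of `F` is contained in `f e`. -/
def HasBergeCopy {W V : Type*} (F : SimpleGraph W) (H : Finset (Finset V)) : Prop :=
  ∃ φ : W → V, Function.Injective φ ∧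
    ∃ f : F.edgeSet → Finset V, Function.Injective f ∧
      ∀ e : F.edgeSet, f e ∈ H ∧ ∀ w ∈ (e : Sym2 W), φ w ∈ f e

open Finset SimpleGraph

lemma acyclic_anti {A : Type*} {F G : SimpleGraph A} (h : G ≤ F) (hF : F.IsAcyclic) :
    G.IsAcyclic := fun _ c hc => hF (c.mapLe h) (hc.mapLe h)

lemma exists_leaf {A : Type*} [Fintype A] {F : SimpleGraph A} (hF : F.IsAcyclic)
    {a b : A} (hab : F.Adj a b) :
    ∃ x y, F.Adj x y ∧ ∀ z, F.Adj x z → z = y := by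
  classical
  set P : ℕ → Prop := fun n => ∃ u v : A, ∃ p : F.Walk u v, p.IsPath ∧ p.length = n with hPdef
  have hP1 : P 1 := ⟨a, b, Walk.cons hab Walk.nil, by simp [hab.ne], by simp⟩
  have hcard : 1 ≤ Fintype.card A := Fintype.card_pos_iff.2 ⟨a⟩
  set N := Nat.findGreatest P (Fintype.card A) with hNdef
  have hN1 : 1 ≤ N := Nat.le_findGreatest hcard hP1
  have hPN : P N := Nat.findGreatest_spec hcard hP1
  obtain ⟨u, v, p, hp, hlen⟩ := hPN
  cases p with
  | nil => simp at hlen; omega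
  | cons h q =>
    rename_i s
    refine ⟨u, s, h, fun z hz => ?_⟩
    by_contra hzs
    have hzu : z ≠ u := hz.ne'
    by_cases hmem : z ∈ (Walk.cons h q).support
    · set q' := (Walk.cons h q).takeUntil z hmem with hq'def
      have hq'path : q'.IsPath := hp.takeUntil hmem
      have hedge : s(z, u) ∉ q'.edges := by
        intro hmem2
        have hin := (Walk.cons h q).edges_takeUntil_subset hmem hmem2
        rw [Walk.edges_cons, List.mem_cons] at hin
        rcases hin with h1 | h2
        · rw [Sym2.eq_iff] at h1
          rcases h1 with ⟨rfl, rfl⟩ | ⟨h1a, h1b⟩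
          · exact hzu rfl
          · exact hzs h1a
        · have hu : u ∈ q.support := Walk.snd_mem_support_of_mem_edges q h2
          exact ((Walk.cons_isPath_iff h q).1 hp).2 hu
      have hcyc : (Walk.cons hz.symm q').IsCycle :=
        (Walk.cons_isCycle_iff q' hz.symm).2 ⟨hq'path, hedge⟩
      exact hF _ hcyc
    · have hlong : (Walk.cons hz.symm (Walk.cons h q)).IsPath :=
        (Walk.cons_isPath_iff _ _).2 ⟨hp, hmem⟩
      have hlt := hlong.length_lt
      rw [Walk.length_cons, hlen] at hlt
      have hnot : ¬ P (N + 1) := Nat.findGreatest_is_greatest (Nat.lt_succ_self N) (le_of_lt hlt)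
      exact hnot ⟨z, v, _, hlong, by rw [Walk.length_cons, hlen]⟩

lemma forest_bound {A : Type*} [Fintype A] :
    ∀ (n : ℕ) (F : SimpleGraph A), F.IsAcyclic → F.edgeSet.ncard = n →
      n = 0 ∨ n + 1 ≤ F.support.ncard := by
  classical
  intro n
  induction n with
  | zero => exact fun _ _ _ => Or.inl rfl
  | succ m ih =>
    intro F hF hn
    right
    have hfin : F.edgeSet.Finite := Set.toFinite _
    have hne : F.edgeSet.Nonempty := by
      rw [← Set.ncard_pos hfin, hn]; omega
    obtain ⟨e, he⟩ := hne
    induction e using Sym2.ind with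
    | _ a b =>
    rw [mem_edgeSet] at he
    obtain ⟨x, y, hxy, hleaf⟩ := exists_leaf hF he
    set F' := F.deleteEdges {s(x, y)} with hF'def
    have hF'le : F' ≤ F := F.deleteEdges_le _
    have hF'a : F'.IsAcyclic := acyclic_anti hF'le hF
    have hE' : F'.edgeSet = F.edgeSet \ {s(x, y)} := F.edgeSet_deleteEdges _
    have hcard' : F'.edgeSet.ncard = m := by
      rw [hE', Set.ncard_diff_singleton_of_mem (F.mem_edgeSet.2 hxy), hn]; omega
    have hxsup : x ∈ F.support := ⟨y, hxy⟩
    rcases ih F' hF'a hcard' with h0 | hs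
    · have hsub : ({x, y} : Set A) ⊆ F.support :=
        fun w hw => by rcases hw with rfl | rfl; exacts [⟨y, hxy⟩, ⟨x, hxy.symm⟩]
      have := Set.ncard_le_ncard hsub (Set.toFinite _)
      rw [Set.ncard_pair hxy.ne] at this
      omega
    · have hxs : x ∉ F'.support := by
        rintro ⟨z, hz⟩
        have hzF : F.Adj x z := hF'le hz
        have hzy := hleaf z hzF
        subst hzy
        change F'.Adj x _ at hz
        rw [hF'def, deleteEdges_adj] at hz
        exact hz.2 rfl
      have hsub : F'.support ⊆ F.support \ {x} :=
        fun w hw => ⟨support_mono hF'le hw, fun h => hxs (h ▸ hw)⟩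
      have h1 : F'.support.ncard ≤ (F.support \ {x}).ncard :=
        Set.ncard_le_ncard hsub (Set.toFinite _)
      have h2 : (F.support \ {x}).ncard = F.support.ncard - 1 :=
        Set.ncard_diff_singleton_of_mem hxsup
      have h3 : 0 < F.support.ncard := (Set.ncard_pos (Set.toFinite _)).2 ⟨x, hxsup⟩
      omega

lemma forest_bound' {A : Type*} [Fintype A] (F : SimpleGraph A) (hF : F.IsAcyclic) :
    F.edgeSet.ncard = 0 ∨ F.edgeSet.ncard + 1 ≤ Fintype.card A := by
  rcases forest_bound _ F hF rfl with h | h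
  · exact Or.inl h
  · right
    refine h.trans ?_
    have := Set.ncard_le_ncard (Set.subset_univ F.support) (Set.toFinite _)
    rwa [Set.ncard_univ, Nat.card_eq_fintype_card] at this

lemma deg_bound {V : Type*} [DecidableEq V] (H : Finset (Finset V)) (r : ℕ)
    (huni : ∀ e ∈ H, e.card = r) (S : Finset V) (u : V) (hu : u ∈ S) :
    (H.filter (fun e => u ∈ e ∧ e ⊆ S)).card ≤ Nat.choose (S.card - 1) (r - 1) := by
  have hmaps : ∀ e ∈ H.filter (fun e => u ∈ e ∧ e ⊆ S),
      e.erase u ∈ (S.erase u).powersetCard (r - 1) := by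
    intro e he
    rw [mem_filter] at he
    obtain ⟨heH, hue, heS⟩ := he
    rw [Finset.mem_powersetCard]
    exact ⟨fun w hw => Finset.mem_erase.2
        ⟨(Finset.mem_erase.1 hw).1, heS (Finset.mem_erase.1 hw).2⟩,
      by rw [Finset.card_erase_of_mem hue, huni e heH]⟩
  have hinj : ∀ e₁ ∈ H.filter (fun e => u ∈ e ∧ e ⊆ S),
      ∀ e₂ ∈ H.filter (fun e => u ∈ e ∧ e ⊆ S), e₁.erase u = e₂.erase u → e₁ = e₂ := by
    intro e₁ h₁ e₂ h₂ h
    rw [mem_filter] at h₁ h₂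
    rw [← Finset.insert_erase h₁.2.1, h, Finset.insert_erase h₂.2.1]
  calc (H.filter (fun e => u ∈ e ∧ e ⊆ S)).card
      ≤ ((S.erase u).powersetCard (r - 1)).card := Finset.card_le_card_of_injOn _ hmaps hinj
    _ = Nat.choose (S.card - 1) (r - 1) := by
        rw [Finset.card_powersetCard, Finset.card_erase_of_mem hu]

lemma build {A V : Type*} [Fintype A] [Fintype V] [DecidableEq V]
    (r : ℕ) (H : Finset (Finset V)) (huni : ∀ e ∈ H, e.card = r)
    (hdeg : ∀ u : V, Nat.choose (Fintype.card A - 2) (r - 1) + Fintype.card A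
      ≤ (H.filter (fun e => u ∈ e)).card)
    (hAV : Fintype.card A ≤ Fintype.card V) :
    ∀ (n : ℕ) (F : SimpleGraph A), F.IsAcyclic → F.edgeSet.ncard = n → HasBergeCopy F H := by
  classical
  intro n
  induction n with
  | zero =>
    intro F hF hn
    have he : F.edgeSet = ∅ := (Set.ncard_eq_zero (Set.toFinite _)).1 hn
    obtain ⟨φ⟩ := Function.Embedding.nonempty_of_card_le hAV
    have hempty : ∀ e : F.edgeSet, False := by
      rintro ⟨e, he2⟩; rw [he] at he2; exact he2
    exact ⟨φ, φ.injective, fun e => ∅, fun e₁ => (hempty e₁).elim, fun e => (hempty e).elim⟩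
  | succ m ih =>
    intro F hF hn
    have hfin : F.edgeSet.Finite := Set.toFinite _
    have hne : F.edgeSet.Nonempty := by rw [← Set.ncard_pos hfin, hn]; omega
    obtain ⟨e, he⟩ := hne
    induction e using Sym2.ind with
    | _ a b =>
    rw [mem_edgeSet] at he
    obtain ⟨x, y, hxy, hleaf⟩ := exists_leaf hF he
    have hyx : y ≠ x := hxy.ne'
    -- key: x is only in the edge s(x,y)
    have key : ∀ ee : Sym2 A, ee ∈ F.edgeSet → ee ≠ s(x, y) → ∀ w ∈ ee, w ≠ x := by
      intro ee
      induction ee using Sym2.ind with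
      | _ c d =>
      intro hcd hnee w hw hwx
      subst hwx
      rw [Sym2.mem_iff] at hw
      rw [mem_edgeSet] at hcd
      rcases hw with rfl | rfl
      · exact hnee (by rw [hleaf d hcd])
      · exact hnee (by rw [hleaf c hcd.symm, Sym2.eq_swap])
    set F' := F.deleteEdges {s(x, y)} with hF'def
    have hF'le : F' ≤ F := F.deleteEdges_le _
    have hF'a : F'.IsAcyclic := acyclic_anti hF'le hF
    have hE' : F'.edgeSet = F.edgeSet \ {s(x, y)} := F.edgeSet_deleteEdges _
    have hxyF : s(x, y) ∈ F.edgeSet := F.mem_edgeSet.2 hxy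
    have hcard' : F'.edgeSet.ncard = m := by
      rw [hE', Set.ncard_diff_singleton_of_mem hxyF, hn]; omega
    obtain ⟨φ, hφinj, f', hf'inj, hf'⟩ := ih F' hF'a hcard'
    -- counting
    set u0 := φ y with hu0def
    set S : Finset V := (Finset.univ.erase x).image φ with hSdef
    have hScard : S.card = Fintype.card A - 1 := by
      rw [hSdef, Finset.card_image_of_injective _ hφinj,
        Finset.card_erase_of_mem (Finset.mem_univ x), Finset.card_univ]
    have hu0S : u0 ∈ S :=
      Finset.mem_image_of_mem φ (Finset.mem_erase.2 ⟨hyx, Finset.mem_univ y⟩)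
    set Bad : Finset (Finset V) :=
      (H.filter (fun e => u0 ∈ e ∧ e ⊆ S)) ∪ (Finset.univ.image fun ε : F'.edgeSet => f' ε)
      with hBaddef
    have hBad1 : (H.filter (fun e => u0 ∈ e ∧ e ⊆ S)).card
        ≤ Nat.choose (Fintype.card A - 2) (r - 1) := by
      have := deg_bound H r huni S u0 hu0S
      rwa [hScard] at this
    have hBad2 : (Finset.univ.image fun ε : F'.edgeSet => f' ε).card ≤ m := by
      calc (Finset.univ.image fun ε : F'.edgeSet => f' ε).card
          ≤ (Finset.univ : Finset F'.edgeSet).card := Finset.card_image_le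
        _ = Fintype.card F'.edgeSet := Finset.card_univ
        _ = m := by rw [← Nat.card_eq_fintype_card, Nat.card_coe_set_eq, hcard']
    have hmk : m + 2 ≤ Fintype.card A := by
      rcases forest_bound' F hF with h | h
      · rw [hn] at h; omega
      · rw [hn] at h; omega
    have hlt : Bad.card < (H.filter (fun e => u0 ∈ e)).card := by
      have h1 : Bad.card ≤ Nat.choose (Fintype.card A - 2) (r - 1) + m :=
        (Finset.card_union_le _ _).trans (by omega)
      have h2 := hdeg u0
      omega
    have hns : ¬ (H.filter (fun e => u0 ∈ e)) ⊆ Bad :=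
      fun hsub => absurd (Finset.card_le_card hsub) (by omega)
    obtain ⟨e0, he0f, he0b⟩ := Finset.not_subset.1 hns
    rw [Finset.mem_filter] at he0f
    obtain ⟨he0H, hu0e0⟩ := he0f
    rw [hBaddef, Finset.mem_union, not_or, Finset.mem_filter] at he0b
    obtain ⟨he0b1, he0b2⟩ := he0b
    have he0S : ¬ e0 ⊆ S := fun h => he0b1 ⟨he0H, hu0e0, h⟩
    have he0im : ∀ ε : F'.edgeSet, f' ε ≠ e0 := by
      intro ε hε
      exact he0b2 (Finset.mem_image.2 ⟨ε, Finset.mem_univ ε, hε⟩)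
    obtain ⟨v0, hv0e0, hv0S⟩ := Finset.not_subset.1 he0S
    -- build the new embedding
    set φ'' : A → V := Function.update φ x v0 with hφ''def
    have hφS : ∀ a : A, a ≠ x → φ a ∈ S :=
      fun a ha => Finset.mem_image_of_mem φ (Finset.mem_erase.2 ⟨ha, Finset.mem_univ a⟩)
    have hφ''inj : Function.Injective φ'' := by
      intro c d hcd
      rw [hφ''def] at hcd
      by_cases hc : c = x <;> by_cases hd : d = x
      · rw [hc, hd]
      · rw [hc] at hcd ⊢
        rw [Function.update_self, Function.update_of_ne hd] at hcd
        exact absurd (hcd ▸ hφS d hd) hv0S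
      · rw [hd] at hcd ⊢
        rw [Function.update_self, Function.update_of_ne hc] at hcd
        exact absurd (hcd ▸ hφS c hc) hv0S
      · rw [Function.update_of_ne hc, Function.update_of_ne hd] at hcd
        exact hφinj hcd
    have hmemF' : ∀ e : F.edgeSet, (e : Sym2 A) ≠ s(x, y) → (e : Sym2 A) ∈ F'.edgeSet := by
      intro e hne
      rw [hE']
      exact ⟨e.2, hne⟩
    set f'' : F.edgeSet → Finset V := fun e =>
      if h : (e : Sym2 A) = s(x, y) then e0 else f' ⟨e, hmemF' e h⟩ with hf''def
    have hf''inj : Function.Injective f'' := by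
      intro e₁ e₂ h
      rw [hf''def] at h
      simp only at h
      by_cases h1 : (e₁ : Sym2 A) = s(x, y) <;> by_cases h2 : (e₂ : Sym2 A) = s(x, y)
      · exact Subtype.ext (h1.trans h2.symm)
      · rw [dif_pos h1, dif_neg h2] at h
        exact absurd h.symm (he0im _)
      · rw [dif_neg h1, dif_pos h2] at h
        exact absurd h (he0im _)
      · rw [dif_neg h1, dif_neg h2] at h
        have h3 := congrArg Subtype.val (hf'inj h)
        exact Subtype.ext h3
    refine ⟨φ'', hφ''inj, f'', hf''inj, ?_⟩
    intro e
    by_cases h : (e : Sym2 A) = s(x, y)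
    · rw [hf''def]
      simp only [dif_pos h]
      refine ⟨he0H, ?_⟩
      intro w hw
      rw [h, Sym2.mem_iff] at hw
      rcases hw with rfl | rfl
      · rw [hφ''def, Function.update_self]; exact hv0e0
      · rw [hφ''def, Function.update_of_ne hyx]; exact hu0e0
    · rw [hf''def]
      simp only [dif_neg h]
      obtain ⟨hH, hmem⟩ := hf' ⟨e, hmemF' e h⟩
      refine ⟨hH, ?_⟩
      intro w hw
      have hwx : w ≠ x := key e e.2 h w hw
      rw [hφ''def, Function.update_of_ne hwx]
      exact hmem w hw

/-- Let `F` be a forest on `k` vertices and `H` a Berge-`F`-free `r`-uniform hypergraph.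
Then `H` contains a vertex `u` with degree `d(u) ≤ C(k-2, r-1) + k - 1`. -/
theorem stmt7 {A V : Type*} [Fintype A] [Fintype V] [Nonempty V] [DecidableEq V]
    (k r : ℕ) (F : SimpleGraph A)
    (hF : F.IsAcyclic) (hcard : Fintype.card A = k)
    (H : Finset (Finset V)) (huni : ∀ e ∈ H, e.card = r)
    (hfree : ¬ HasBergeCopy F H) :
    ∃ u : V, (H.filter (fun e => u ∈ e)).card ≤ Nat.choose (k - 2) (r - 1) + k - 1 := by
  classical
  subst hcard
  rcases le_or_gt (Fintype.card A) (Fintype.card V) with hle | hlt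
  · by_contra hcon
    push_neg at hcon
    have hdeg : ∀ u : V, Nat.choose (Fintype.card A - 2) (r - 1) + Fintype.card A
        ≤ (H.filter (fun e => u ∈ e)).card := by
      intro u
      have := hcon u
      omega
    exact hfree (build r H huni hdeg hle _ F hF rfl)
  · obtain ⟨u⟩ := (inferInstance : Nonempty V)
    refine ⟨u, ?_⟩
    have h1 : H.filter (fun e => u ∈ e) = H.filter (fun e => u ∈ e ∧ e ⊆ Finset.univ) := by
      apply Finset.filter_congr
      intro e _
      simp [Finset.subset_univ]
    have h2 := deg_bound H r huni Finset.univ u (Finset.mem_univ u)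
    rw [← h1, Finset.card_univ] at h2
    have hV1 : 1 ≤ Fintype.card V := Fintype.card_pos
    have h3 : Nat.choose (Fintype.card V - 1) (r - 1)
        ≤ Nat.choose (Fintype.card A - 2) (r - 1) :=
      Nat.choose_le_choose _ (by omega)
    omega
end

section
/- Let F be a forest on k vertices and r ≥ 3. Every Berge-F-free r-uniform hypergraph H satisfies χ_s(H) ≤ (r-1)(C(k-2, r-1) + k - 1) + 1. -/
/-- The strong chromatic number of a hypergraph. -/
noncomputable def strongChrom {V : Type*} (H : Finset (Finset V)) : ℕ :=
  sInf {m | ∃ c : V → Fin m, ∀ e ∈ H, Set.InjOn c (e : Set V)}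

open Finset SimpleGraph

section AuxLemmas

variable {A V : Type*} [Fintype A] [DecidableEq A] {F : SimpleGraph A} [DecidableRel F.Adj]

private lemma exists_leaf_s8 (hF : F.IsAcyclic) {B : Finset A} (hB : B.Nonempty) :
    ∃ b ∈ B, (B.filter (F.Adj b)).card ≤ 1 := by
  classical
  set P : Set ℕ := {n | ∃ (u v : A) (p : F.Walk u v), p.IsPath ∧ (∀ a ∈ p.support, a ∈ B) ∧
    p.length = n} with hP
  obtain ⟨b0, hb0⟩ := hB
  have hP0 : 0 ∈ P := ⟨b0, b0, Walk.nil, Walk.IsPath.nil, by simp [hb0], rfl⟩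
  have hbdd : BddAbove P := by
    refine ⟨Fintype.card A, fun n hn => ?_⟩
    obtain ⟨u, v, p, hp, _, hl⟩ := hn
    exact hl ▸ hp.length_lt.le
  have hLmem := Nat.sSup_mem ⟨0, hP0⟩ hbdd
  obtain ⟨v, u, p, hp, hsup, hlen⟩ := hLmem
  have hmax : ∀ (u' v' : A) (q : F.Walk u' v'), q.IsPath → (∀ a ∈ q.support, a ∈ B) →
      q.length ≤ p.length := by
    intro u' v' q hq hqs
    rw [hlen]
    exact le_csSup hbdd ⟨u', v', q, hq, hqs, rfl⟩
  refine ⟨v, hsup _ p.start_mem_support, ?_⟩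
  cases p with
  | nil =>
    have : B.filter (F.Adj v) = ∅ := by
      rw [Finset.eq_empty_iff_forall_notMem]
      intro a ha
      rw [Finset.mem_filter] at ha
      have hq : (Walk.cons ha.2.symm (Walk.nil : F.Walk v v)).IsPath := by
        rw [Walk.cons_isPath_iff]
        exact ⟨Walk.IsPath.nil, by simp [ha.2.ne']⟩
      have := hmax _ _ _ hq (by simp [ha.1, hsup v (by simp)])
      simp at this
    simp [this]
  | cons h t =>
    rename_i w
    have hp' := (Walk.cons_isPath_iff h t).mp hp
    have hsub : B.filter (F.Adj v) ⊆ {w} := by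
      intro a ha
      rw [Finset.mem_filter] at ha
      rw [Finset.mem_singleton]
      by_contra haw
      by_cases hat : a ∈ t.support
      · -- build a cycle : cons (Adj a v) (cons h (t.takeUntil a)) : Walk a a
        have hvtk : v ∉ (t.takeUntil a hat).support :=
          fun hc => hp'.2 (Walk.support_takeUntil_subset t hat hc)
        have hpath : (Walk.cons h (t.takeUntil a hat)).IsPath :=
          (Walk.cons_isPath_iff _ _).mpr ⟨hp'.1.takeUntil hat, hvtk⟩
        have hedge : s(v, a) ∉ (Walk.cons h (t.takeUntil a hat)).edges := by
          rw [Walk.edges_cons]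
          intro hc
          rcases List.mem_cons.mp hc with h1 | h1
          · rw [Sym2.eq_iff] at h1
            rcases h1 with ⟨-, h2⟩ | ⟨h2, -⟩
            · exact haw h2
            · exact h.ne h2
          · exact hvtk ((t.takeUntil a hat).fst_mem_support_of_mem_edges h1)
        have hcyc : (Walk.cons ha.2.symm (Walk.cons h (t.takeUntil a hat))).IsCycle := by
          rw [Walk.cons_isCycle_iff]
          exact ⟨hpath, by rwa [Sym2.eq_swap] at hedge⟩
        exact hF _ hcyc
      · have hat2 : a ∉ (Walk.cons h t).support := by
          rw [Walk.support_cons]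
          intro hc
          rcases List.mem_cons.mp hc with rfl | h1
          · exact F.irrefl ha.2
          · exact hat h1
        have hq : (Walk.cons ha.2.symm (Walk.cons h t)).IsPath :=
          (Walk.cons_isPath_iff _ _).mpr ⟨hp, hat2⟩
        have := hmax _ _ _ hq (by
          intro x hx
          rw [Walk.support_cons] at hx
          rcases List.mem_cons.mp hx with rfl | h1
          · exact ha.1
          · exact hsup _ h1)
        simp at this
    calc (B.filter (F.Adj v)).card ≤ ({w} : Finset A).card := Finset.card_le_card hsub
    _ = 1 := Finset.card_singleton w


private lemma mem_EB {B : Finset A} {e : Sym2 A} :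
    e ∈ (univ.filter (fun e : Sym2 A => e ∈ F.edgeSet ∧ ∀ a ∈ e, a ∈ B)) ↔
      e ∈ F.edgeSet ∧ ∀ a ∈ e, a ∈ B := by
  simp


private lemma forest_edge_bound (hF : F.IsAcyclic) (B : Finset A) :
    (univ.filter (fun e : Sym2 A => e ∈ F.edgeSet ∧ ∀ a ∈ e, a ∈ B)).card ≤ B.card - 1 := by
  induction B using Finset.strongInduction with
  | _ B ih =>
    rcases B.eq_empty_or_nonempty with rfl | hBne
    · convert Nat.zero_le _
      rw [Finset.card_eq_zero, Finset.eq_empty_iff_forall_notMem]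
      intro e he
      rw [mem_EB] at he
      induction e using Sym2.ind with
      | _ c d => exact absurd (he.2 c (by simp)) (by simp)
    · obtain ⟨b, hbB, hb1⟩ := exists_leaf_s8 hF hBne
      have hsub : (univ.filter (fun e : Sym2 A => e ∈ F.edgeSet ∧ ∀ a ∈ e, a ∈ B)) ⊆
          (univ.filter (fun e : Sym2 A => e ∈ F.edgeSet ∧ ∀ a ∈ e, a ∈ B.erase b)) ∪
          (B.filter (F.Adj b)).image (fun a => s(b, a)) := by
        intro e he
        rw [Finset.mem_union]
        by_cases hbe : b ∈ e
        · right
          rw [Finset.mem_image]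
          rw [mem_EB] at he
          induction e using Sym2.ind with
          | _ c d =>
            have hcd : F.Adj c d := he.1
            rcases Sym2.mem_iff.mp hbe with rfl | rfl
            · exact ⟨d, by rw [mem_filter]; exact ⟨he.2 d (by simp), hcd⟩, rfl⟩
            · exact ⟨c, by rw [mem_filter]; exact ⟨he.2 c (by simp), hcd.symm⟩, Sym2.eq_swap⟩
        · left
          rw [mem_EB] at he ⊢
          refine ⟨he.1, fun a ha => Finset.mem_erase.mpr ⟨fun hc => hbe (hc ▸ ha), he.2 a ha⟩⟩
      have h1 := ih (B.erase b) (Finset.erase_ssubset hbB)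
      have h2 : ((B.filter (F.Adj b)).image (fun a => s(b, a))).card ≤ 1 :=
        le_trans Finset.card_image_le hb1
      have h3 : (B.erase b).card = B.card - 1 := Finset.card_erase_of_mem hbB
      have h4 := le_trans (Finset.card_le_card hsub) (Finset.card_union_le _ _)
      have h5 : 1 ≤ B.card := Finset.card_pos.mpr hBne
      have h6 : (B.filter (F.Adj b)).card ≤ (B.erase b).card := by
        refine Finset.card_le_card (fun a ha => ?_)
        rw [Finset.mem_filter] at ha
        exact Finset.mem_erase.mpr ⟨ha.2.ne', ha.1⟩
      have h7 : ((B.filter (F.Adj b)).image (fun a => s(b, a))).card ≤ (B.erase b).card :=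
        le_trans Finset.card_image_le h6
      refine le_trans h4 (le_trans (add_le_add h1 (le_refl _)) ?_)
      rw [h3] at *
      omega


private lemma arith (k r : ℕ) (hr : 3 ≤ r) :
    (k-1) + (k-2)*(r-1) + 1 ≤ (r-1) * (Nat.choose (k-2) (r-1) + k - 1) + 1 := by
  match k with
  | 0 => simp
  | 1 => simp
  | (k+2) =>
    have h1 : (k+2) - 1 = k+1 := rfl
    have h2 : (k+2) - 2 = k := rfl
    rw [h1, h2]
    have h3 : Nat.choose k (r-1) + (k+2) - 1 = Nat.choose k (r-1) + (k+1) := by omega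
    rw [h3]
    have key : k + 1 ≤ (r-1) * (Nat.choose k (r-1) + 1) := by
      by_cases hkr : k + 2 ≤ r
      · calc k+1 ≤ (r-1) := by omega
        _ = (r-1)*1 := (mul_one _).symm
        _ ≤ (r-1)*(Nat.choose k (r-1)+1) := Nat.mul_le_mul_left _ (by omega)
      · push_neg at hkr
        have hj : r - 1 ≤ k := by omega
        obtain ⟨m, hm⟩ : ∃ m, k = m + (r-1) := ⟨k - (r-1), by omega⟩
        have hC : m + 1 ≤ Nat.choose k (r-1) := by
          rw [← Nat.choose_symm hj]
          have hkm : k - (r-1) = m := by omega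
          rw [hkm]
          calc m + 1 = Nat.choose (m+1) m := (Nat.choose_succ_self_right _).symm
          _ ≤ Nat.choose k m := Nat.choose_le_choose m (by omega)
        have h6 : m + (r-1) + 1 ≤ (r-1) * (m + 2) := by
          have h7 : (r-1) * (m+2) = (r-1)*m + 2*(r-1) := by ring
          rw [h7]
          have h8 : m ≤ (r-1)*m := Nat.le_mul_of_pos_left m (by omega)
          have h9 : 2 ≤ r - 1 := by omega
          linarith
        calc k + 1 = m + (r-1) + 1 := by omega
        _ ≤ (r-1)*(m+2) := h6
        _ ≤ (r-1)*(Nat.choose k (r-1) + 1) := Nat.mul_le_mul_left _ (by omega)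
    have h10 : (r-1) * (Nat.choose k (r-1) + (k+1)) =
        (r-1)*(Nat.choose k (r-1)+1) + (r-1)*k := by ring
    rw [h10]
    have h11 : (k+1) + k*(r-1) ≤ (r-1)*(Nat.choose k (r-1)+1) + (r-1)*k := by
      have : k*(r-1) = (r-1)*k := Nat.mul_comm _ _
      linarith
    omega

private lemma embed [Fintype V] [DecidableEq V] (k r : ℕ) (hF : F.IsAcyclic)
    (hcard : Fintype.card A = k)
    (H : Finset (Finset V)) (huni : ∀ e ∈ H, e.card = r)
    (S : Finset V) (hS : S.Nonempty)
    (hdeg : ∀ x ∈ S, (k-1) + (k-2)*(r-1) + 1 ≤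
      (S.filter (fun y => x ≠ y ∧ ∃ e ∈ H, x ∈ e ∧ y ∈ e)).card) :
    HasBergeCopy F H := by
  classical
  have key : ∀ B : Finset A, ∃ (φ : A → V) (f : Sym2 A → Finset V),
      Set.InjOn φ ↑B ∧ (∀ a ∈ B, φ a ∈ S) ∧
      (∀ e ∈ univ.filter (fun e : Sym2 A => e ∈ F.edgeSet ∧ ∀ a ∈ e, a ∈ B),
        f e ∈ H ∧ ∀ a ∈ e, φ a ∈ f e) ∧
      Set.InjOn f ↑(univ.filter (fun e : Sym2 A => e ∈ F.edgeSet ∧ ∀ a ∈ e, a ∈ B)) := by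
    intro B
    induction B using Finset.strongInduction with
    | _ B ih =>
      rcases B.eq_empty_or_nonempty with rfl | hBne
      · have hEB : (univ.filter (fun e : Sym2 A => e ∈ F.edgeSet ∧ ∀ a ∈ e, a ∈ (∅ : Finset A)))
            = ∅ := by
          rw [Finset.eq_empty_iff_forall_notMem]
          intro e he
          rw [Finset.mem_filter] at he
          induction e using Sym2.ind with
          | _ c d => exact absurd (he.2.2 c (by simp)) (by simp)
        refine ⟨fun _ => hS.choose, fun _ => ∅, by simp, by simp, ?_, ?_⟩
        · intro e he
          rw [hEB] at he
          exact absurd he (Finset.notMem_empty e)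
        · rw [hEB]
          simp
      · obtain ⟨b, hbB, hb1⟩ := exists_leaf_s8 hF hBne
        obtain ⟨φ, f, hφi, hφS, hfe, hfi⟩ := ih (B.erase b) (Finset.erase_ssubset hbB)
        -- basic facts
        have hBcard : B.card ≤ k := hcard ▸ Finset.card_le_univ B
        have hB'card : (B.erase b).card ≤ k - 1 := by
          rw [Finset.card_erase_of_mem hbB]
          exact Nat.sub_le_sub_right hBcard 1
        have hΦcard : ((B.erase b).image φ).card ≤ k - 1 :=
          le_trans Finset.card_image_le hB'card
        have hScard : ∀ x ∈ S, k - 1 < S.card := by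
          intro x hx
          have h1 := hdeg x hx
          have h2 : (S.filter (fun y => x ≠ y ∧ ∃ e ∈ H, x ∈ e ∧ y ∈ e)).card ≤ S.card :=
            Finset.card_le_card (Finset.filter_subset _ _)
          omega
        -- the new edge membership helper
        have hEBmem : ∀ e : Sym2 A,
            (e ∈ univ.filter (fun e : Sym2 A => e ∈ F.edgeSet ∧ ∀ a ∈ e, a ∈ B)) ↔
            (e ∈ F.edgeSet ∧ ∀ a ∈ e, a ∈ B) := by intro e; simp
        -- case on neighbors of b in B.erase b
        rcases (B.filter (F.Adj b)).eq_empty_or_nonempty with hnb | ⟨u, hu⟩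
        · -- no neighbor case
          obtain ⟨x0, hx0⟩ := hS
          have hSN : ((B.erase b).image φ).card < S.card := lt_of_le_of_lt hΦcard (hScard x0 hx0)
          obtain ⟨y, hyS, hyΦ⟩ : ∃ y ∈ S, y ∉ (B.erase b).image φ := by
            by_contra hc
            push_neg at hc
            exact absurd (Finset.card_le_card hc) (not_le.mpr hSN)
          have hnoe : ∀ e : Sym2 A, e ∈ F.edgeSet → (∀ a ∈ e, a ∈ B) → b ∉ e := by
            intro e hee heB hbe
            induction e using Sym2.ind with
            | _ c d =>
              have hcd : F.Adj c d := hee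
              rcases Sym2.mem_iff.mp hbe with rfl | rfl
              · have : d ∈ B.filter (F.Adj b) := Finset.mem_filter.mpr ⟨heB d (by simp), hcd⟩
                simp [hnb] at this
              · have : c ∈ B.filter (F.Adj b) := Finset.mem_filter.mpr ⟨heB c (by simp), hcd.symm⟩
                simp [hnb] at this
          have hBsub : ∀ e : Sym2 A, e ∈ F.edgeSet → (∀ a ∈ e, a ∈ B) →
              (∀ a ∈ e, a ∈ B.erase b) := by
            intro e hee heB a hae
            exact Finset.mem_erase.mpr ⟨fun hc => hnoe e hee heB (hc ▸ hae), heB a hae⟩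
          refine ⟨Function.update φ b y, f, ?_, ?_, ?_, ?_⟩
          · intro a1 h1 a2 h2 heq
            rw [Finset.mem_coe] at h1 h2
            by_cases e1 : a1 = b <;> by_cases e2 : a2 = b
            · rw [e1, e2]
            · rw [e1] at heq ⊢
              rw [Function.update_self, Function.update_of_ne e2] at heq
              exact absurd (Finset.mem_image_of_mem φ (Finset.mem_erase.mpr ⟨e2, h2⟩))
                (heq ▸ hyΦ)
            · rw [e2] at heq ⊢
              rw [Function.update_self, Function.update_of_ne e1] at heq
              exact absurd (Finset.mem_image_of_mem φ (Finset.mem_erase.mpr ⟨e1, h1⟩))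
                (heq.symm ▸ hyΦ)
            · rw [Function.update_of_ne e1, Function.update_of_ne e2] at heq
              exact hφi (Finset.mem_coe.mpr (Finset.mem_erase.mpr ⟨e1, h1⟩))
                (Finset.mem_coe.mpr (Finset.mem_erase.mpr ⟨e2, h2⟩)) heq
          · intro a ha
            by_cases e1 : a = b
            · rw [e1, Function.update_self]; exact hyS
            · rw [Function.update_of_ne e1]
              exact hφS a (Finset.mem_erase.mpr ⟨e1, ha⟩)
          · intro e he
            rw [hEBmem] at he
            have he' : e ∈ univ.filter
                (fun e : Sym2 A => e ∈ F.edgeSet ∧ ∀ a ∈ e, a ∈ B.erase b) := by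
              simp only [Finset.mem_filter, Finset.mem_univ, true_and]
              exact ⟨he.1, hBsub e he.1 he.2⟩
            refine ⟨(hfe e he').1, fun a hae => ?_⟩
            rw [Function.update_of_ne (fun hc => hnoe e he.1 he.2 (by rw [← hc]; exact hae))]
            exact (hfe e he').2 a hae
          · intro e1 h1 e2 h2 heq
            simp only [Finset.coe_filter, Set.mem_setOf_eq, Finset.mem_univ, true_and] at h1 h2
            refine hfi ?_ ?_ heq <;>
              simp only [Finset.coe_filter, Set.mem_setOf_eq, Finset.mem_univ, true_and]
            · exact ⟨h1.1, hBsub e1 h1.1 h1.2⟩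
            · exact ⟨h2.1, hBsub e2 h2.1 h2.2⟩
        · obtain ⟨huB, hbu⟩ := Finset.mem_filter.mp hu
          have hub : u ≠ b := hbu.ne'
          have huB' : u ∈ B.erase b := Finset.mem_erase.mpr ⟨hub, huB⟩
          have huniq : ∀ a ∈ B, F.Adj b a → a = u := fun a ha hba =>
            Finset.card_le_one.mp hb1 a (Finset.mem_filter.mpr ⟨ha, hba⟩) u hu
          have hforce : ∀ e : Sym2 A, e ∈ F.edgeSet → (∀ a ∈ e, a ∈ B) → b ∈ e →
              e = s(b, u) := by
            intro e hee heB hbe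
            induction e using Sym2.ind with
            | _ c d =>
              have hcd : F.Adj c d := hee
              rcases Sym2.mem_iff.mp hbe with rfl | rfl
              · rw [huniq d (heB d (by simp)) hcd]
              · rw [huniq c (heB c (by simp)) hcd.symm, Sym2.eq_swap]
          have hB'mem : ∀ e : Sym2 A, e ∈ F.edgeSet → (∀ a ∈ e, a ∈ B) → b ∉ e →
              (∀ a ∈ e, a ∈ B.erase b) := by
            intro e hee heB hbe a hae
            exact Finset.mem_erase.mpr ⟨fun hc => hbe (by rw [← hc]; exact hae), heB a hae⟩
          have hxS : φ u ∈ S := hφS u huB'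
          have hUcard : ((univ.filter (fun e : Sym2 A => e ∈ F.edgeSet ∧
              ∀ a ∈ e, a ∈ B.erase b)).image f).card ≤ k - 2 := by
            have h1 := forest_edge_bound hF (B.erase b)
            have h2 : ((univ.filter (fun e : Sym2 A => e ∈ F.edgeSet ∧
                ∀ a ∈ e, a ∈ B.erase b)).image f).card ≤ (univ.filter (fun e : Sym2 A =>
                e ∈ F.edgeSet ∧ ∀ a ∈ e, a ∈ B.erase b)).card := Finset.card_image_le
            omega
          set U := (univ.filter (fun e : Sym2 A => e ∈ F.edgeSet ∧
            ∀ a ∈ e, a ∈ B.erase b)).image f with hU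
          set Bad := (U.filter (fun e => φ u ∈ e)).biUnion (fun e => e.erase (φ u)) with hBad
          have hBadcard : Bad.card ≤ (k-2) * (r-1) := by
            refine le_trans (Finset.card_biUnion_le_card_mul _ _ (r-1) ?_) ?_
            · intro e he
              rw [Finset.mem_filter] at he
              obtain ⟨e0, he0, rfl⟩ := Finset.mem_image.mp he.1
              have hr : (f e0).card = r := huni _ (hfe e0 he0).1
              rw [Finset.card_erase_of_mem he.2, hr]
            · have h3 : (U.filter (fun e => φ u ∈ e)).card ≤ k - 2 :=
                le_trans (Finset.card_le_card (Finset.filter_subset _ _)) hUcard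
              exact Nat.mul_le_mul_right _ h3
          have hcount : 1 ≤ ((S.filter (fun y => φ u ≠ y ∧ ∃ e ∈ H, φ u ∈ e ∧ y ∈ e)) \ ((B.erase b).image φ ∪ Bad)).card := by
            have h1 := hdeg (φ u) hxS
            have h2 : (((B.erase b).image φ) ∪ Bad).card ≤ (k-1) + (k-2)*(r-1) :=
              le_trans (Finset.card_union_le _ _) (add_le_add hΦcard hBadcard)
            have h3 := Finset.le_card_sdiff (((B.erase b).image φ) ∪ Bad)
              (S.filter (fun y => φ u ≠ y ∧ ∃ e ∈ H, φ u ∈ e ∧ y ∈ e))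
            omega
          obtain ⟨y, hy⟩ := Finset.card_pos.mp (lt_of_lt_of_le Nat.zero_lt_one hcount)
          rw [Finset.mem_sdiff, Finset.mem_filter] at hy
          obtain ⟨⟨hyS, hxy, e', he', hxe', hye'⟩, hyU⟩ := hy
          have hyΦ : y ∉ (B.erase b).image φ := fun hc => hyU (Finset.mem_union_left _ hc)
          have he'U : e' ∉ U := by
            intro hc
            refine (fun hc2 => hyU (Finset.mem_union_right _ hc2) : y ∉ Bad) ?_
            rw [hBad, Finset.mem_biUnion]
            exact ⟨e', Finset.mem_filter.mpr ⟨hc, hxe'⟩,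
              Finset.mem_erase.mpr ⟨Ne.symm hxy, hye'⟩⟩
          refine ⟨Function.update φ b y, Function.update f s(b, u) e', ?_, ?_, ?_, ?_⟩
          · intro a1 h1 a2 h2 heq
            rw [Finset.mem_coe] at h1 h2
            by_cases e1 : a1 = b <;> by_cases e2 : a2 = b
            · rw [e1, e2]
            · rw [e1] at heq ⊢
              rw [Function.update_self, Function.update_of_ne e2] at heq
              exact absurd (Finset.mem_image_of_mem φ (Finset.mem_erase.mpr ⟨e2, h2⟩))
                (heq ▸ hyΦ)
            · rw [e2] at heq ⊢
              rw [Function.update_self, Function.update_of_ne e1] at heq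
              exact absurd (Finset.mem_image_of_mem φ (Finset.mem_erase.mpr ⟨e1, h1⟩))
                (heq.symm ▸ hyΦ)
            · rw [Function.update_of_ne e1, Function.update_of_ne e2] at heq
              exact hφi (Finset.mem_coe.mpr (Finset.mem_erase.mpr ⟨e1, h1⟩))
                (Finset.mem_coe.mpr (Finset.mem_erase.mpr ⟨e2, h2⟩)) heq
          · intro a ha
            by_cases e1 : a = b
            · rw [e1, Function.update_self]; exact hyS
            · rw [Function.update_of_ne e1]
              exact hφS a (Finset.mem_erase.mpr ⟨e1, ha⟩)
          · intro e he
            rw [hEBmem] at he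
            by_cases hbe : b ∈ e
            · have heq := hforce e he.1 he.2 hbe
              subst heq
              rw [Function.update_self]
              refine ⟨he', fun a hae => ?_⟩
              rcases Sym2.mem_iff.mp hae with rfl | rfl
              · rw [Function.update_self]; exact hye'
              · rw [Function.update_of_ne hub]; exact hxe'
            · have hne : e ≠ s(b, u) := fun hc => hbe (hc ▸ Sym2.mem_mk_left b u)
              rw [Function.update_of_ne hne]
              have he2 : e ∈ univ.filter (fun e : Sym2 A => e ∈ F.edgeSet ∧
                  ∀ a ∈ e, a ∈ B.erase b) := by
                simp only [Finset.mem_filter, Finset.mem_univ, true_and]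
                exact ⟨he.1, hB'mem e he.1 he.2 hbe⟩
              refine ⟨(hfe e he2).1, fun a hae => ?_⟩
              rw [Function.update_of_ne (fun hc => hbe (by rw [← hc]; exact hae))]
              exact (hfe e he2).2 a hae
          · intro e1 h1 e2 h2 heq
            simp only [Finset.coe_filter, Set.mem_setOf_eq, Finset.mem_univ, true_and] at h1 h2
            by_cases hb1e : b ∈ e1 <;> by_cases hb2e : b ∈ e2
            · rw [hforce e1 h1.1 h1.2 hb1e, hforce e2 h2.1 h2.2 hb2e]
            · exfalso
              have hq1 := hforce e1 h1.1 h1.2 hb1e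
              have hne2 : e2 ≠ s(b, u) := fun hc => hb2e (hc ▸ Sym2.mem_mk_left b u)
              rw [hq1, Function.update_self, Function.update_of_ne hne2] at heq
              refine he'U ?_
              rw [hU, Finset.mem_image]
              refine ⟨e2, ?_, heq.symm⟩
              simp only [Finset.mem_filter, Finset.mem_univ, true_and]
              exact ⟨h2.1, hB'mem e2 h2.1 h2.2 hb2e⟩
            · exfalso
              have hq2 := hforce e2 h2.1 h2.2 hb2e
              have hne1 : e1 ≠ s(b, u) := fun hc => hb1e (hc ▸ Sym2.mem_mk_left b u)
              rw [hq2, Function.update_self, Function.update_of_ne hne1] at heq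
              refine he'U ?_
              rw [hU, Finset.mem_image]
              refine ⟨e1, ?_, heq⟩
              simp only [Finset.mem_filter, Finset.mem_univ, true_and]
              exact ⟨h1.1, hB'mem e1 h1.1 h1.2 hb1e⟩
            · have hne1 : e1 ≠ s(b, u) := fun hc => hb1e (hc ▸ Sym2.mem_mk_left b u)
              have hne2 : e2 ≠ s(b, u) := fun hc => hb2e (hc ▸ Sym2.mem_mk_left b u)
              rw [Function.update_of_ne hne1, Function.update_of_ne hne2] at heq
              refine hfi ?_ ?_ heq <;>
                simp only [Finset.coe_filter, Set.mem_setOf_eq, Finset.mem_univ, true_and]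
              · exact ⟨h1.1, hB'mem e1 h1.1 h1.2 hb1e⟩
              · exact ⟨h2.1, hB'mem e2 h2.1 h2.2 hb2e⟩
  obtain ⟨φ, f, hφi, hφS, hfe, hfi⟩ := key univ
  refine ⟨φ, fun a1 a2 h => hφi (by simp) (by simp) h, fun e => f e.val, ?_, ?_⟩
  · intro e1 e2 h
    have h1 : (e1 : Sym2 A) ∈ (univ.filter (fun e : Sym2 A => e ∈ F.edgeSet ∧
        ∀ a ∈ e, a ∈ (univ : Finset A)) : Finset (Sym2 A)) := by
      simp only [Finset.mem_filter, Finset.mem_univ, true_and]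
      exact ⟨e1.property, fun a _ => trivial⟩
    have h2 : (e2 : Sym2 A) ∈ (univ.filter (fun e : Sym2 A => e ∈ F.edgeSet ∧
        ∀ a ∈ e, a ∈ (univ : Finset A)) : Finset (Sym2 A)) := by
      simp only [Finset.mem_filter, Finset.mem_univ, true_and]
      exact ⟨e2.property, fun a _ => trivial⟩
    exact Subtype.ext (hfi (Finset.mem_coe.mpr h1) (Finset.mem_coe.mpr h2) h)
  · intro e
    have h1 : (e : Sym2 A) ∈ (univ.filter (fun e : Sym2 A => e ∈ F.edgeSet ∧
        ∀ a ∈ e, a ∈ (univ : Finset A)) : Finset (Sym2 A)) := by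
      simp only [Finset.mem_filter, Finset.mem_univ, true_and]
      exact ⟨e.property, fun a _ => trivial⟩
    exact hfe e.val h1

end AuxLemmas


/-- Let `F` be a forest on `k` vertices and `r ≥ 3`. Every Berge-`F`-free `r`-uniform
hypergraph `H` satisfies `χ_s(H) ≤ (r-1)(C(k-2, r-1) + k - 1) + 1`. -/
theorem stmt8 {A V : Type*} [Fintype A] [Fintype V]
    (k r : ℕ) (hr : 3 ≤ r) (F : SimpleGraph A)
    (hF : F.IsAcyclic) (hcard : Fintype.card A = k)
    (H : Finset (Finset V)) (huni : ∀ e ∈ H, e.card = r)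
    (hfree : ¬ HasBergeCopy F H) :
    strongChrom H ≤ (r - 1) * (Nat.choose (k - 2) (r - 1) + k - 1) + 1 := by
  letI : DecidableEq A := Classical.decEq A
  letI : DecidableEq V := Classical.decEq V
  letI : DecidableRel F.Adj := fun a b => Classical.propDecidable _
  have harith := arith k r hr
  have hdeg : ∀ S : Finset V, S.Nonempty → ∃ x ∈ S,
      (S.filter (fun y => x ≠ y ∧ ∃ e ∈ H, x ∈ e ∧ y ∈ e)).card <
        (r-1) * (Nat.choose (k-2) (r-1) + k - 1) + 1 := by
    intro S hS
    by_contra hcon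
    push_neg at hcon
    refine hfree (embed k r hF hcard H huni S hS ?_)
    intro x hx
    exact le_trans harith (hcon x hx)
  have hcol : ∀ S : Finset V, ∃ c : V → Fin ((r-1) * (Nat.choose (k-2) (r-1) + k - 1) + 1),
      ∀ u ∈ S, ∀ v ∈ S, (u ≠ v ∧ ∃ e ∈ H, u ∈ e ∧ v ∈ e) → c u ≠ c v := by
    intro S
    induction S using Finset.strongInduction with
    | _ S ih =>
      rcases S.eq_empty_or_nonempty with rfl | hS
      · exact ⟨fun _ => ⟨0, Nat.succ_pos _⟩, by simp⟩
      · obtain ⟨x, hxS, hxdeg⟩ := hdeg S hS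
        obtain ⟨c, hc⟩ := ih (S.erase x) (Finset.erase_ssubset hxS)
        have hcolors : ((S.filter (fun y => x ≠ y ∧ ∃ e ∈ H, x ∈ e ∧ y ∈ e)).image c).card
            < (r-1) * (Nat.choose (k-2) (r-1) + k - 1) + 1 :=
          lt_of_le_of_lt Finset.card_image_le hxdeg
        obtain ⟨fresh, hfresh⟩ : ∃ a : Fin ((r-1) * (Nat.choose (k-2) (r-1) + k - 1) + 1),
            a ∉ (S.filter (fun y => x ≠ y ∧ ∃ e ∈ H, x ∈ e ∧ y ∈ e)).image c := by
          by_contra hfull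
          push_neg at hfull
          have h1 : (Finset.univ : Finset (Fin ((r-1) * (Nat.choose (k-2) (r-1) + k - 1) + 1)))
              ⊆ (S.filter (fun y => x ≠ y ∧ ∃ e ∈ H, x ∈ e ∧ y ∈ e)).image c :=
            fun a _ => hfull a
          have h2 := Finset.card_le_card h1
          rw [Finset.card_univ, Fintype.card_fin] at h2
          omega
        refine ⟨Function.update c x fresh, ?_⟩
        rintro u hu v hv ⟨hne, e, he, hue, hve⟩
        by_cases hux : u = x <;> by_cases hvx : v = x
        · exact absurd (hux.trans hvx.symm) hne
        · subst hux
          rw [Function.update_self, Function.update_of_ne hvx]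
          intro hcontra
          refine hfresh ?_
          rw [hcontra]
          exact Finset.mem_image_of_mem c (Finset.mem_filter.mpr ⟨hv, hne, e, he, hue, hve⟩)
        · subst hvx
          rw [Function.update_self, Function.update_of_ne hux]
          intro hcontra
          refine hfresh ?_
          rw [← hcontra]
          exact Finset.mem_image_of_mem c
            (Finset.mem_filter.mpr ⟨hu, Ne.symm hne, e, he, hve, hue⟩)
        · rw [Function.update_of_ne hux, Function.update_of_ne hvx]
          exact hc u (Finset.mem_erase.mpr ⟨hux, hu⟩) v (Finset.mem_erase.mpr ⟨hvx, hv⟩)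
            ⟨hne, e, he, hue, hve⟩
  obtain ⟨c, hc⟩ := hcol Finset.univ
  have hmem : ((r-1) * (Nat.choose (k-2) (r-1) + k - 1) + 1) ∈
      {m | ∃ c : V → Fin m, ∀ e ∈ H, Set.InjOn c (e : Set V)} := by
    refine ⟨c, fun e he u hu v hv hcv => ?_⟩
    by_contra hne
    exact hc u (Finset.mem_univ u) v (Finset.mem_univ v) ⟨hne, e, he, hu, hv⟩ hcv
  exact Nat.sInf_le hmem
end

section
/- Let T be a tree with k edges and maximum degree Δ. Every at most r-uniform hypergraph H without a Berge copy of T satisfies χ_s(H) ≤ k + (r-3)(k-1) + Δ - 1. -/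
open Finset SimpleGraph

open scoped Classical in
noncomputable def edgesIn {A : Type*} [Fintype A] [DecidableEq A] (T : SimpleGraph A)
    [DecidableRel T.Adj] (B : Finset A) : Finset (Sym2 A) :=
  T.edgeFinset.filter (fun ε => ∀ x ∈ ε, x ∈ B)

lemma mem_edgesIn {A : Type*} [Fintype A] [DecidableEq A] {T : SimpleGraph A}
    [DecidableRel T.Adj] {B : Finset A} {ε : Sym2 A} :
    ε ∈ edgesIn T B ↔ ε ∈ T.edgeFinset ∧ ∀ x ∈ ε, x ∈ B := by
  simp [edgesIn]


lemma treeStructure {A : Type*} [DecidableEq A] {T : SimpleGraph A} (hT : T.IsTree) :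
    ∃ (ρ : A) (depth : A → ℕ) (par : A → A),
      depth ρ = 0 ∧
      (∀ a, depth a = 0 → a = ρ) ∧
      (∀ a, a ≠ ρ → T.Adj a (par a) ∧ depth (par a) + 1 = depth a) ∧
      (∀ a b, T.Adj a b → depth b + 1 = depth a → b = par a) ∧
      (∀ a b, T.Adj a b → depth b + 1 = depth a ∨ depth a + 1 = depth b) := by
  obtain ⟨ρ⟩ := hT.isConnected.nonempty
  have hup := hT.existsUnique_path
  choose up hup1 hup2 using fun a => hup a ρ
  set depth : A → ℕ := fun a => (up a).length with hdepth
  -- basic facts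
  have hρ : depth ρ = 0 := by
    have : (Walk.nil : T.Walk ρ ρ) = up ρ := hup2 ρ Walk.nil Walk.IsPath.nil
    simp [hdepth, ← this]
  have hzero : ∀ a, depth a = 0 → a = ρ := fun a h => Walk.eq_of_length_eq_zero h
  -- trichotomy
  have tri : ∀ a b, T.Adj a b → depth b + 1 = depth a ∨ depth a + 1 = depth b := by
    intro a b hab
    by_cases hb : b ∈ (up a).support
    · left
      have h1 : ((up a).takeUntil b hb).append ((up a).dropUntil b hb) = up a :=
        Walk.take_spec _ hb
      have hp1 : ((up a).takeUntil b hb).IsPath := (hup1 a).takeUntil hb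
      have hp2 : ((up a).dropUntil b hb).IsPath := (hup1 a).dropUntil hb
      have hsingle : (Walk.cons hab Walk.nil : T.Walk a b).IsPath := by
        simp [Walk.cons_isPath_iff, hab.ne]
      have := (hup a b).unique hsingle hp1
      have hlen : ((up a).takeUntil b hb).length = 1 := by rw [← this]; simp
      have hdrop : (up a).dropUntil b hb = up b := hup2 b _ hp2
      have := congrArg Walk.length h1
      rw [Walk.length_append, hlen, hdrop] at this
      simp [hdepth]; omega
    · right
      have hp : (Walk.cons hab.symm (up a) : T.Walk b ρ).IsPath :=
        (hup1 a).cons (by exact hb)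
      have := hup2 b _ hp
      have := congrArg Walk.length this
      simp [hdepth] at this ⊢
      omega
  -- unique smaller neighbor: if Adj a b and depth b + 1 = depth a then up a = cons hab (up b)
  have hcons : ∀ a b (hab : T.Adj a b), depth b + 1 = depth a →
      up a = Walk.cons hab (up b) := by
    intro a b hab hd
    refine (hup2 a _ ?_).symm
    refine (hup1 b).cons ?_
    intro ha
    have h1 : ((up b).takeUntil a ha).append ((up b).dropUntil a ha) = up b :=
      Walk.take_spec _ ha
    have hp2 : ((up b).dropUntil a ha).IsPath := (hup1 b).dropUntil ha
    have hdrop : (up b).dropUntil a ha = up a := hup2 a _ hp2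
    have hlen := congrArg Walk.length h1
    rw [Walk.length_append, hdrop] at hlen
    have hpos : 0 < ((up b).takeUntil a ha).length := by
      rcases Nat.eq_zero_or_pos ((up b).takeUntil a ha).length with h0 | h
      · exact absurd (Walk.eq_of_length_eq_zero h0) hab.ne'
      · exact h
    simp only [hdepth] at hd
    omega
  -- parent existence
  have parEx : ∀ a, ∃ b, a ≠ ρ → T.Adj a b ∧ depth b + 1 = depth a := by
    intro a
    by_cases ha : a = ρ
    · exact ⟨ρ, fun h => absurd ha h⟩
    · obtain ⟨b, hab, q, hq⟩ := Walk.exists_eq_cons_of_ne ha (up a)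
      have hqp : q.IsPath := by
        have := hup1 a
        rw [hq] at this
        exact this.of_cons
      have hqb : q = up b := hup2 b _ hqp
      refine ⟨b, fun _ => ⟨hab, ?_⟩⟩
      have := congrArg Walk.length hq
      simp [hdepth, this, hqb]
  choose par hpar using parEx
  refine ⟨ρ, depth, par, hρ, hzero, fun a ha => hpar a ha, ?_, tri⟩
  intro a b hab hd
  have haρ : a ≠ ρ := by
    intro h; rw [h, hρ] at hd; omega
  obtain ⟨hadj, hdp⟩ := hpar a haρ
  have e1 := hcons a b hab hd
  have e2 := hcons a (par a) hadj hdp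
  have := congrArg (fun w => w.getVert 1) (e1.symm.trans e2)
  simpa [Walk.getVert_cons_succ, Walk.getVert_zero] using this


lemma colorOfDegen {V : Type*} [Fintype V] [DecidableEq V] (H : Finset (Finset V)) (m : ℕ)
    (hm : 0 < m)
    (hdeg : ∀ S : Finset V, S.Nonempty →
      ∃ v ∈ S, ((S.erase v).filter (fun w => ∃ e ∈ H, v ∈ e ∧ w ∈ e)).card < m) :
    ∃ c : V → Fin m, ∀ e ∈ H, Set.InjOn c (e : Set V) := by
  have key : ∀ S : Finset V, ∃ c : V → Fin m, ∀ e ∈ H, Set.InjOn c ((e ∩ S : Finset V) : Set V) := by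
    intro S
    induction S using Finset.strongInduction with
    | _ S ih =>
      rcases S.eq_empty_or_nonempty with rfl | hS
      · exact ⟨fun _ => ⟨0, hm⟩, fun e _ => by simp [Set.InjOn]⟩
      · obtain ⟨v, hvS, hvdeg⟩ := hdeg S hS
        obtain ⟨c, hc⟩ := ih (S.erase v) (Finset.erase_ssubset hvS)
        set N : Finset V := (S.erase v).filter (fun w => ∃ e ∈ H, v ∈ e ∧ w ∈ e) with hN
        have hcard : (N.image c).card < m := lt_of_le_of_lt (Finset.card_image_le) hvdeg
        have : ∃ j : Fin m, j ∉ N.image c := by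
          by_contra hcon
          push_neg at hcon
          have : (Finset.univ : Finset (Fin m)) ⊆ N.image c := fun j _ => hcon j
          have := Finset.card_le_card this
          simp at this
          omega
        obtain ⟨j, hj⟩ := this
        refine ⟨Function.update c v j, fun e he => ?_⟩
        intro x hx y hy hxy
        simp only [Finset.coe_inter, Set.mem_inter_iff, Finset.mem_coe] at hx hy
        by_cases hxv : x = v <;> by_cases hyv : y = v
        · rw [hxv, hyv]
        · exfalso
          have hyN : y ∈ N := by
            rw [hN]; simp only [Finset.mem_filter, Finset.mem_erase]
            exact ⟨⟨hyv, hy.2⟩, e, he, hxv ▸ hx.1, hy.1⟩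
          have : Function.update c v j y = c y := Function.update_of_ne hyv _ _
          rw [hxv] at hxy
          rw [Function.update_self, this] at hxy
          exact hj (hxy ▸ Finset.mem_image_of_mem c hyN)
        · exfalso
          have hxN : x ∈ N := by
            rw [hN]; simp only [Finset.mem_filter, Finset.mem_erase]
            exact ⟨⟨hxv, hx.2⟩, e, he, hyv ▸ hy.1, hx.1⟩
          have : Function.update c v j x = c x := Function.update_of_ne hxv _ _
          rw [hyv] at hxy
          rw [Function.update_self, this] at hxy
          exact hj (hxy.symm ▸ Finset.mem_image_of_mem c hxN)
        · have h1 : Function.update c v j x = c x := Function.update_of_ne hxv _ _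
          have h2 : Function.update c v j y = c y := Function.update_of_ne hyv _ _
          rw [h1, h2] at hxy
          exact hc e he (by simp [hx.1, Finset.mem_erase, hxv, hx.2])
            (by simp [hy.1, Finset.mem_erase, hyv, hy.2]) hxy
  obtain ⟨c, hc⟩ := key Finset.univ
  exact ⟨c, fun e he => by simpa using hc e he⟩

lemma embedBerge {A V : Type*} [Fintype A] [DecidableEq A] [Fintype V] [DecidableEq V]
    (T : SimpleGraph A) [DecidableRel T.Adj] (hT : T.IsTree) (k r Δ : ℕ)
    (hk : T.edgeFinset.card = k) (hΔ : T.maxDegree = Δ) (hk1 : 1 ≤ k)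
    (H : Finset (Finset V)) (hsize : ∀ e ∈ H, 2 ≤ e.card ∧ e.card ≤ r)
    (S : Finset V) (hS : S.Nonempty)
    (hdeg : ∀ v ∈ S, k + (r - 3) * (k - 1) + Δ - 1 ≤
      ((S.erase v).filter (fun w => ∃ e ∈ H, v ∈ e ∧ w ∈ e)).card) :
    HasBergeCopy T H := by
  classical
  obtain ⟨ρ, depth, par, hρ0, hzero, hpar, hparU, htri⟩ := treeStructure hT
  have cardA : Fintype.card A = k + 1 := by
    have := hT.card_edgeFinset
    omega
  -- membership in edgesIn gives membership in B
  have memB : ∀ {B : Finset A} {ε : Sym2 A}, ε ∈ edgesIn T B → ∀ x ∈ ε, x ∈ B :=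
    fun h => (mem_edgesIn.1 h).2
  -- growth lemma
  have growth : ∀ B : Finset A, ρ ∈ B → (∀ b ∈ B, b ≠ ρ → par b ∈ B) →
      B.card < Fintype.card A →
      ∃ a, a ∉ B ∧ a ≠ ρ ∧ par a ∈ B ∧ (∀ b ∈ B, T.Adj a b → b = par a) := by
    intro B hρB hcl hcard
    have hne : (Finset.univ \ B).Nonempty := by
      rw [← Finset.card_pos, Finset.card_sdiff_of_subset (Finset.subset_univ B)]
      simp only [Finset.card_univ]
      omega
    obtain ⟨a, hamem, hamin⟩ := Finset.exists_min_image (Finset.univ \ B) depth hne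
    have haB : a ∉ B := (Finset.mem_sdiff.1 hamem).2
    have haρ : a ≠ ρ := fun h => haB (h ▸ hρB)
    obtain ⟨hadj, hdp⟩ := hpar a haρ
    have hparB : par a ∈ B := by
      by_contra hc
      have := hamin (par a) (Finset.mem_sdiff.2 ⟨Finset.mem_univ _, hc⟩)
      omega
    refine ⟨a, haB, haρ, hparB, ?_⟩
    intro b hbB hab
    rcases htri a b hab with h | h
    · exact hparU a b hab h
    · exfalso
      have hbρ : b ≠ ρ := by
        intro hb; rw [hb, hρ0] at h; omega
      have : a = par b := hparU b a hab.symm h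
      exact haB (this ▸ hcl b hbB hbρ)
  -- the edges of insert a B
  have edgesInsert : ∀ (B : Finset A) (a : A), a ∉ B → a ≠ ρ → par a ∈ B →
      (∀ b ∈ B, T.Adj a b → b = par a) →
      edgesIn T (insert a B) = insert (s(a, par a)) (edgesIn T B) := by
    intro B a haB haρ hpB huniq
    ext ε
    induction ε using Sym2.inductionOn with
    | hf x y =>
      simp only [mem_edgesIn, Finset.mem_insert]
      constructor
      · rintro ⟨hedge, hmem⟩
        have hadj : T.Adj x y := by rwa [SimpleGraph.mem_edgeFinset, SimpleGraph.mem_edgeSet] at hedge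
        have hx := hmem x (by simp)
        have hy := hmem y (by simp)
        rcases hx with rfl | hxB
        · rcases hy with rfl | hyB
          · exact absurd hadj (T.irrefl)
          · left
            have := huniq y hyB hadj
            rw [this]
        · rcases hy with rfl | hyB
          · left
            have := huniq x hxB hadj.symm
            rw [this, Sym2.eq_swap]
          · right
            refine ⟨hedge, ?_⟩
            intro z hz
            rcases Sym2.mem_iff.1 hz with rfl | rfl <;> assumption
      · rintro (h | h)
        · have hadj : T.Adj a (par a) := (hpar a haρ).1
          rw [h]
          constructor
          · rwa [SimpleGraph.mem_edgeFinset, SimpleGraph.mem_edgeSet]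
          · intro z hz
            rcases Sym2.mem_iff.1 hz with rfl | rfl
            · exact Or.inl rfl
            · exact Or.inr hpB
        · exact ⟨h.1, fun z hz => Or.inr (h.2 z hz)⟩
  
  -- main induction
  set m := k + (r - 3) * (k - 1) + Δ - 1 with hm
  obtain ⟨s₀, hs₀⟩ := hS
  have main : ∀ n, n + 1 ≤ Fintype.card A → ∃ (B : Finset A) (φ : A → V) (f : Sym2 A → Finset V),
      B.card = n + 1 ∧ ρ ∈ B ∧ (∀ b ∈ B, b ≠ ρ → par b ∈ B) ∧
      (edgesIn T B).card + 1 = n + 1 ∧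
      Set.InjOn φ ↑B ∧ (∀ b ∈ B, φ b ∈ S) ∧ Set.InjOn f ↑(edgesIn T B) ∧
      (∀ ε ∈ edgesIn T B, f ε ∈ H ∧ ∀ x ∈ ε, φ x ∈ f ε) := by
    intro n
    induction n with
    | zero =>
      intro _
      have hempty : edgesIn T {ρ} = ∅ := by
        ext ε
        induction ε using Sym2.inductionOn with
        | hf x y =>
          simp only [mem_edgesIn, Finset.notMem_empty, iff_false]
          rintro ⟨hedge, hmem⟩
          have hadj : T.Adj x y := by
            rwa [SimpleGraph.mem_edgeFinset, SimpleGraph.mem_edgeSet] at hedge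
          have hx : x = ρ := by simpa using hmem x (by simp)
          have hy : y = ρ := by simpa using hmem y (by simp)
          rw [hx, hy] at hadj
          exact T.irrefl hadj
      refine ⟨{ρ}, fun _ => s₀, fun _ => ∅, by simp, by simp, by simp, by simp [hempty], ?_,
        fun b _ => hs₀, by simp [hempty], by simp [hempty]⟩
      intro x hx y hy _
      simp only [Finset.coe_singleton, Set.mem_singleton_iff] at hx hy
      rw [hx, hy]
    | succ n ih =>
      intro hcard
      obtain ⟨B, φ, f, hBcard, hρB, hcl, hEcard, hφinj, hφS, hfinj, hprop⟩ := ih (by omega)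
      obtain ⟨a, haB, haρ, hpB, huniq⟩ := growth B hρB hcl (by omega)
      set p := par a with hp
      set u := φ p with hudef
      have hu : u ∈ S := hφS p hpB
      set N := (S.erase u).filter (fun w => ∃ e ∈ H, u ∈ e ∧ w ∈ e) with hNdef
      have hNdeg : m ≤ N.card := hdeg u hu
      set UsedV := B.image φ with hUV
      set UsedE := (edgesIn T B).image f with hUE
      have hpa : p ≠ a := fun h => haB (h ▸ hpB)
      have hadj_ap : T.Adj a p := (hpar a haρ).1
      have claim : ∃ w ∈ N, w ∉ UsedV ∧ ∃ e ∈ H, u ∈ e ∧ w ∈ e ∧ e ∉ UsedE := by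
        by_contra hcon
        push_neg at hcon
        set filt := (edgesIn T B).filter (fun ε => u ∈ f ε) with hfiltdef
        have hsub : N ⊆ (UsedV.erase u) ∪ filt.biUnion (fun ε => f ε \ UsedV) := by
          intro w hw
          by_cases hwU : w ∈ UsedV
          · apply Finset.mem_union_left
            refine Finset.mem_erase.2 ⟨?_, hwU⟩
            exact (Finset.mem_erase.1 (Finset.mem_filter.1 hw).1).1
          · apply Finset.mem_union_right
            obtain ⟨e, heH, hue, hwe⟩ := (Finset.mem_filter.1 hw).2
            have heUE : e ∈ UsedE := hcon w hw hwU e heH hue hwe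
            obtain ⟨ε, hεmem, hεe⟩ := Finset.mem_image.1 heUE
            refine Finset.mem_biUnion.2 ⟨ε, ?_, ?_⟩
            · exact Finset.mem_filter.2 ⟨hεmem, by rw [hεe]; exact hue⟩
            · rw [hεe]; exact Finset.mem_sdiff.2 ⟨hwe, hwU⟩
        have huUV : u ∈ UsedV := Finset.mem_image_of_mem φ hpB
        have h1 : (UsedV.erase u).card ≤ n := by
          have himg : UsedV.card ≤ n + 1 := by
            rw [hUV]
            exact Finset.card_image_le.trans (le_of_eq hBcard)
          rw [Finset.card_erase_of_mem huUV]
          omega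
        -- per-edge bounds
        have hend : ∀ ε ∈ edgesIn T B, p ∈ ε → (f ε \ UsedV).card ≤ r - 2 := by
          intro ε
          induction ε using Sym2.inductionOn with
          | hf x y =>
            intro hε _
            have hadj : T.Adj x y := by
              have := (mem_edgesIn.1 hε).1
              rwa [SimpleGraph.mem_edgeFinset, SimpleGraph.mem_edgeSet] at this
            have hxB : x ∈ B := memB hε x (by simp)
            have hyB : y ∈ B := memB hε y (by simp)
            have hφx : φ x ∈ f s(x, y) := (hprop _ hε).2 x (by simp)
            have hφy : φ y ∈ f s(x, y) := (hprop _ hε).2 y (by simp)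
            have hne : φ x ≠ φ y := fun h => hadj.ne (hφinj hxB hyB h)
            have hsub2 : (f s(x, y) \ UsedV) ∪ {φ x, φ y} ⊆ f s(x, y) := by
              intro z hz
              rcases Finset.mem_union.1 hz with hz | hz
              · exact (Finset.mem_sdiff.1 hz).1
              · rcases Finset.mem_insert.1 hz with rfl | hz
                · exact hφx
                · rw [Finset.mem_singleton.1 hz]; exact hφy
            have hdisj : Disjoint (f s(x, y) \ UsedV) ({φ x, φ y} : Finset V) := by
              rw [Finset.disjoint_right]
              intro z hz
              rcases Finset.mem_insert.1 hz with rfl | hz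
              · simp [show φ x ∈ UsedV from Finset.mem_image_of_mem φ hxB]
              · rw [Finset.mem_singleton.1 hz]
                simp [show φ y ∈ UsedV from Finset.mem_image_of_mem φ hyB]
            have hcards := Finset.card_le_card hsub2
            rw [Finset.card_union_of_disjoint hdisj, Finset.card_pair hne] at hcards
            have hr := (hsize _ (hprop _ hε).1).2
            omega
        have hend2 : ∀ ε ∈ edgesIn T B, p ∉ ε → u ∈ f ε → (f ε \ UsedV).card ≤ r - 3 := by
          intro ε
          induction ε using Sym2.inductionOn with
          | hf x y =>
            intro hε hpε huε
            have hadj : T.Adj x y := by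
              have := (mem_edgesIn.1 hε).1
              rwa [SimpleGraph.mem_edgeFinset, SimpleGraph.mem_edgeSet] at this
            have hxB : x ∈ B := memB hε x (by simp)
            have hyB : y ∈ B := memB hε y (by simp)
            have hφx : φ x ∈ f s(x, y) := (hprop _ hε).2 x (by simp)
            have hφy : φ y ∈ f s(x, y) := (hprop _ hε).2 y (by simp)
            have hxp : x ≠ p := fun h => hpε (by rw [← h]; simp)
            have hyp : y ≠ p := fun h => hpε (by rw [← h]; simp)
            have hne : φ x ≠ φ y := fun h => hadj.ne (hφinj hxB hyB h)
            have hneux : u ≠ φ x := fun h => hxp (hφinj hxB hpB h.symm)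
            have hneuy : u ≠ φ y := fun h => hyp (hφinj hyB hpB h.symm)
            have hsub2 : (f s(x, y) \ UsedV) ∪ {u, φ x, φ y} ⊆ f s(x, y) := by
              intro z hz
              rcases Finset.mem_union.1 hz with hz | hz
              · exact (Finset.mem_sdiff.1 hz).1
              · rcases Finset.mem_insert.1 hz with rfl | hz
                · exact huε
                · rcases Finset.mem_insert.1 hz with rfl | hz
                  · exact hφx
                  · rw [Finset.mem_singleton.1 hz]; exact hφy
            have hdisj : Disjoint (f s(x, y) \ UsedV) ({u, φ x, φ y} : Finset V) := by
              rw [Finset.disjoint_right]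
              intro z hz
              rcases Finset.mem_insert.1 hz with rfl | hz
              · simp [huUV]
              · rcases Finset.mem_insert.1 hz with rfl | hz
                · simp [show φ x ∈ UsedV from Finset.mem_image_of_mem φ hxB]
                · rw [Finset.mem_singleton.1 hz]
                  simp [show φ y ∈ UsedV from Finset.mem_image_of_mem φ hyB]
            have hcard3 : ({u, φ x, φ y} : Finset V).card = 3 := by
              rw [Finset.card_insert_of_notMem (by simp [hneux, hneuy]),
                Finset.card_pair hne]
            have hcards := Finset.card_le_card hsub2
            rw [Finset.card_union_of_disjoint hdisj, hcard3] at hcards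
            have hr := (hsize _ (hprop _ hε).1).2
            omega
        set fP := filt.filter (fun ε => p ∈ ε) with hfP
        set fQ := filt.filter (fun ε => p ∉ ε) with hfQ
        have hsplit : fP ∪ fQ = filt := Finset.filter_union_filter_not_eq _ _
        have hdisjPQ : Disjoint fP fQ := by
          rw [Finset.disjoint_left]
          intro ε h1' h2'
          exact (Finset.mem_filter.1 h2').2 (Finset.mem_filter.1 h1').2
        have hbiU : (filt.biUnion (fun ε => f ε \ UsedV)).card ≤
            fP.card * (r - 2) + fQ.card * (r - 3) := by
          calc (filt.biUnion (fun ε => f ε \ UsedV)).card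
              ≤ ∑ ε ∈ filt, (f ε \ UsedV).card := Finset.card_biUnion_le
            _ = ∑ ε ∈ fP, (f ε \ UsedV).card + ∑ ε ∈ fQ, (f ε \ UsedV).card := by
                rw [← hsplit, Finset.sum_union hdisjPQ]
            _ ≤ fP.card * (r - 2) + fQ.card * (r - 3) := by
                apply add_le_add
                · have := Finset.sum_le_card_nsmul fP (fun ε => (f ε \ UsedV).card) (r - 2) ?_
                  · simpa using this
                  · intro ε hε
                    have h' := Finset.mem_filter.1 hε
                    have h'' := Finset.mem_filter.1 h'.1
                    exact hend ε h''.1 h'.2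
                · have := Finset.sum_le_card_nsmul fQ (fun ε => (f ε \ UsedV).card) (r - 3) ?_
                  · simpa using this
                  · intro ε hε
                    have h' := Finset.mem_filter.1 hε
                    have h'' := Finset.mem_filter.1 h'.1
                    exact hend2 ε h''.1 h'.2 h''.2
        have hPdeg : fP.card + 1 ≤ Δ := by
          have hsubP : insert (s(a, p)) fP ⊆ T.incidenceFinset p := by
            intro ε hε
            rw [SimpleGraph.mem_incidenceFinset]
            rcases Finset.mem_insert.1 hε with rfl | hε
            · exact ⟨(T.mem_edgeSet).2 hadj_ap, by simp⟩
            · have h' := Finset.mem_filter.1 hε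
              have h'' := Finset.mem_filter.1 h'.1
              exact ⟨SimpleGraph.mem_edgeFinset.1 (mem_edgesIn.1 h''.1).1, h'.2⟩
          have hnotin : s(a, p) ∉ fP := by
            intro hc
            have h' := Finset.mem_filter.1 hc
            have h'' := Finset.mem_filter.1 h'.1
            exact haB (memB h''.1 a (by simp))
          have hc1 := Finset.card_le_card hsubP
          rw [Finset.card_insert_of_notMem hnotin] at hc1
          rw [SimpleGraph.card_incidenceFinset_eq_degree] at hc1
          have := T.degree_le_maxDegree p
          omega
        have hPQn : fP.card + fQ.card ≤ n := by
          have : (fP ∪ fQ).card ≤ (edgesIn T B).card :=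
            Finset.card_le_card (hsplit ▸ Finset.filter_subset _ _)
          rw [Finset.card_union_of_disjoint hdisjPQ] at this
          omega
        have hnk : n + 1 ≤ k := by omega
        have key : m ≤ n + (fP.card * (r - 2) + fQ.card * (r - 3)) := by
          calc m ≤ N.card := hNdeg
            _ ≤ ((UsedV.erase u) ∪ filt.biUnion (fun ε => f ε \ UsedV)).card :=
                Finset.card_le_card hsub
            _ ≤ (UsedV.erase u).card + (filt.biUnion (fun ε => f ε \ UsedV)).card :=
                Finset.card_union_le _ _
            _ ≤ n + (fP.card * (r - 2) + fQ.card * (r - 3)) := add_le_add h1 hbiU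
        rw [hm] at key
        rcases le_or_gt r 2 with hr2 | hr2
        · have e0 : r - 2 = 0 := by omega
          have e1 : r - 3 = 0 := by omega
          rw [e0, e1] at key
          simp only [Nat.zero_mul, Nat.mul_zero, Nat.add_zero, Nat.zero_add] at key
          omega
        · have e2 : r - 2 = (r - 3) + 1 := by omega
          rw [e2, Nat.mul_succ] at key
          have hmul : fP.card * (r - 3) + fQ.card * (r - 3) ≤ (k - 1) * (r - 3) := by
            rw [← Nat.add_mul]
            exact Nat.mul_le_mul_right _ (by omega)
          rw [Nat.mul_comm (r - 3) (k - 1)] at key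
          generalize hX : (k - 1) * (r - 3) = X at key hmul
          generalize hA : fP.card * (r - 3) = Pa at key hmul
          generalize hB2 : fQ.card * (r - 3) = Qa at key hmul
          omega
      obtain ⟨w, hwN, hwUV, e, heH, hue, hwe, heUE⟩ := claim
      have hwS : w ∈ S := Finset.mem_of_mem_erase (Finset.mem_filter.1 hwN).1
      have hepaE : edgesIn T (insert a B) = insert s(a, p) (edgesIn T B) :=
        edgesInsert B a haB haρ hpB huniq
      have hepaNot : s(a, p) ∉ edgesIn T B := fun h => haB (memB h a (by simp))
      refine ⟨insert a B, Function.update φ a w, Function.update f s(a, p) e,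
        ?_, ?_, ?_, ?_, ?_, ?_, ?_, ?_⟩
      · rw [Finset.card_insert_of_notMem haB, hBcard]
      · exact Finset.mem_insert_of_mem hρB
      · intro b hb hbρ
        rcases Finset.mem_insert.1 hb with rfl | hbB
        · exact Finset.mem_insert_of_mem hpB
        · exact Finset.mem_insert_of_mem (hcl b hbB hbρ)
      · rw [hepaE, Finset.card_insert_of_notMem hepaNot]
        omega
      · intro x hx y hy hxy
        simp only [Finset.coe_insert, Set.mem_insert_iff, Finset.mem_coe] at hx hy
        by_cases hxa : x = a <;> by_cases hya : y = a
        · rw [hxa, hya]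
        · exfalso
          have hyB : y ∈ B := hy.resolve_left hya
          rw [hxa, Function.update_self, Function.update_of_ne hya] at hxy
          exact hwUV (hxy ▸ Finset.mem_image_of_mem φ hyB)
        · exfalso
          have hxB : x ∈ B := hx.resolve_left hxa
          rw [hya, Function.update_self, Function.update_of_ne hxa] at hxy
          exact hwUV (hxy ▸ Finset.mem_image_of_mem φ hxB)
        · have hxB : x ∈ B := hx.resolve_left hxa
          have hyB : y ∈ B := hy.resolve_left hya
          rw [Function.update_of_ne hxa, Function.update_of_ne hya] at hxy
          exact hφinj hxB hyB hxy
      · intro b hb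
        rcases Finset.mem_insert.1 hb with rfl | hbB
        · rw [Function.update_self]; exact hwS
        · rw [Function.update_of_ne (ne_of_mem_of_not_mem hbB haB)]; exact hφS b hbB
      · rw [hepaE]
        intro ε1 h1' ε2 h2' heq
        simp only [Finset.coe_insert, Set.mem_insert_iff, Finset.mem_coe] at h1' h2'
        by_cases he1 : ε1 = s(a, p) <;> by_cases he2 : ε2 = s(a, p)
        · rw [he1, he2]
        · exfalso
          have hε2B : ε2 ∈ edgesIn T B := h2'.resolve_left he2
          rw [he1, Function.update_self, Function.update_of_ne he2] at heq
          exact heUE (heq ▸ Finset.mem_image_of_mem f hε2B)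
        · exfalso
          have hε1B : ε1 ∈ edgesIn T B := h1'.resolve_left he1
          rw [he2, Function.update_self, Function.update_of_ne he1] at heq
          exact heUE (heq ▸ Finset.mem_image_of_mem f hε1B)
        · have hε1B : ε1 ∈ edgesIn T B := h1'.resolve_left he1
          have hε2B : ε2 ∈ edgesIn T B := h2'.resolve_left he2
          rw [Function.update_of_ne he1, Function.update_of_ne he2] at heq
          exact hfinj hε1B hε2B heq
      · intro ε hε
        rw [hepaE] at hε
        rcases Finset.mem_insert.1 hε with rfl | hεB
        · rw [Function.update_self]
          refine ⟨heH, ?_⟩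
          intro z hz
          rcases Sym2.mem_iff.1 hz with rfl | rfl
          · rw [Function.update_self]; exact hwe
          · rw [Function.update_of_ne hpa]; exact hue
        · have hne : ε ≠ s(a, p) := fun h => hepaNot (h ▸ hεB)
          rw [Function.update_of_ne hne]
          refine ⟨(hprop ε hεB).1, ?_⟩
          intro z hz
          have hzB : z ∈ B := memB hεB z hz
          rw [Function.update_of_ne (ne_of_mem_of_not_mem hzB haB)]
          exact (hprop ε hεB).2 z hz
  -- conclude
  obtain ⟨B, φ, f, hBcard, _, _, _, hφinj, _, hfinj, hprop⟩ := main k (by omega)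
  have hBuniv : B = Finset.univ := by
    apply Finset.eq_univ_of_card
    rw [hBcard, cardA]
  subst hBuniv
  have hφ : Function.Injective φ := by
    intro x y h
    exact hφinj (by simp) (by simp) h
  have hmemU : ∀ ε : T.edgeSet, (ε : Sym2 A) ∈ edgesIn T Finset.univ := by
    intro ε
    exact mem_edgesIn.2 ⟨SimpleGraph.mem_edgeFinset.2 ε.2, fun x _ => Finset.mem_univ x⟩
  refine ⟨φ, hφ, fun ε => f ε.1, ?_, ?_⟩
  · intro ε1 ε2 h
    exact Subtype.ext (hfinj (Finset.mem_coe.2 (hmemU ε1)) (Finset.mem_coe.2 (hmemU ε2)) h)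
  · intro ε
    exact ⟨(hprop _ (hmemU ε)).1, fun z hz => (hprop _ (hmemU ε)).2 z hz⟩

/-- Let `T` be a tree with `k` edges and maximum degree `Δ`. Every at most `r`-uniform
hypergraph `H` without a Berge copy of `T` satisfies `χ_s(H) ≤ k + (r-3)(k-1) + Δ - 1`. -/
theorem stmt10 {A V : Type*} [Fintype A] [DecidableEq A] [Fintype V]
    (k r Δ : ℕ) (T : SimpleGraph A) [DecidableRel T.Adj]
    (hT : T.IsTree) (hk : T.edgeFinset.card = k) (hΔ : T.maxDegree = Δ)
    (H : Finset (Finset V)) (hsize : ∀ e ∈ H, 2 ≤ e.card ∧ e.card ≤ r)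
    (hfree : ¬ HasBergeCopy T H) :
    strongChrom H ≤ k + (r - 3) * (k - 1) + Δ - 1 := by
  classical
  by_cases hV : IsEmpty V
  · have h0 : (0 : ℕ) ∈ {m | ∃ c : V → Fin m, ∀ e ∈ H, Set.InjOn c (e : Set V)} :=
      ⟨fun v => isEmptyElim v, fun e _ x _ => isEmptyElim x⟩
    exact le_trans (Nat.sInf_le h0) (Nat.zero_le _)
  · have hVne : Nonempty V := not_isEmpty_iff.1 hV
    by_cases hk0 : k = 0
    · exfalso
      apply hfree
      obtain ⟨v0⟩ := hVne
      have hcardA : Fintype.card A = 1 := by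
        have := hT.card_edgeFinset
        omega
      have hempty : IsEmpty T.edgeSet := by
        constructor
        intro e
        have hmem := SimpleGraph.mem_edgeFinset.2 e.2
        have hEe : T.edgeFinset = ∅ := Finset.card_eq_zero.1 (hk.trans hk0)
        rw [hEe] at hmem
        exact absurd hmem (Finset.notMem_empty _)
      refine ⟨fun _ => v0, ?_, fun _ => (∅ : Finset V), ?_, ?_⟩
      · intro x y _
        exact Fintype.card_le_one_iff.1 (le_of_eq hcardA) x y
      · intro e
        exact isEmptyElim e
      · intro e
        exact isEmptyElim e
    · have hk1 : 1 ≤ k := by omega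
      have hΔ1 : 1 ≤ Δ := by
        obtain ⟨ε, hε⟩ := Finset.card_pos.1 (show 0 < T.edgeFinset.card by omega)
        induction ε using Sym2.inductionOn with
        | hf x y =>
          have hadj : T.Adj x y := by
            rwa [SimpleGraph.mem_edgeFinset, SimpleGraph.mem_edgeSet] at hε
          have h1 : 0 < T.degree x := (T.degree_pos_iff_exists_adj x).2 ⟨y, hadj⟩
          have h2 := T.degree_le_maxDegree x
          omega
      have hm1 : 1 ≤ k + (r - 3) * (k - 1) + Δ - 1 := by omega
      have hdegen : ∀ S : Finset V, S.Nonempty →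
          ∃ v ∈ S, ((S.erase v).filter (fun w => ∃ e ∈ H, v ∈ e ∧ w ∈ e)).card
            < k + (r - 3) * (k - 1) + Δ - 1 := by
        intro S hS
        by_contra hcon
        push_neg at hcon
        exact hfree (embedBerge T hT k r Δ hk hΔ hk1 H hsize S hS hcon)
      obtain ⟨c, hc⟩ := colorOfDegen H (k + (r - 3) * (k - 1) + Δ - 1) hm1 hdegen
      exact Nat.sInf_le ⟨c, hc⟩
end

section
/- Suppose the Steiner system S((r-1)(k-1)+1, r, 2) exists and let H be this r-uniform hypergraph on n = (r-1)(k-1)+1 vertices in which every pair of vertices is contained in exactly one hyperedge. Then H contains no Berge copy of the star S_k with k edges, and χ_s(H) = (r-1)(k-1)+1. -/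
/-- The star with `k` edges: vertex `0` is joined to the `k` other vertices. -/
def starGraph (k : ℕ) : SimpleGraph (Fin (k + 1)) where
  Adj a b := a ≠ b ∧ (a = 0 ∨ b = 0)
  symm := ⟨by rintro a b ⟨h1, h2⟩; exact ⟨h1.symm, h2.symm⟩⟩
  loopless := ⟨by rintro a ⟨h1, -⟩; exact h1 rfl⟩

/-- Degree lemma: in the Steiner system every vertex lies in exactly `k-1` edges. -/
lemma steiner_degree {V : Type*} [Fintype V] [DecidableEq V] (k r : ℕ) (hr : 3 ≤ r)
    (H : Finset (Finset V))
    (hcard : Fintype.card V = (r - 1) * (k - 1) + 1)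
    (huni : ∀ e ∈ H, e.card = r)
    (hSteiner : ∀ u v : V, u ≠ v → ∃! e, e ∈ H ∧ u ∈ e ∧ v ∈ e)
    (v : V) : (H.filter (fun e => v ∈ e)).card = k - 1 := by
  set Ev := H.filter (fun e => v ∈ e) with hEv
  have hdisj : ∀ e₁ ∈ Ev, ∀ e₂ ∈ Ev, e₁ ≠ e₂ → Disjoint (e₁.erase v) (e₂.erase v) := by
    intro e₁ h₁ e₂ h₂ hne
    simp only [hEv, Finset.mem_filter] at h₁ h₂
    rw [Finset.disjoint_left]
    intro u hu₁ hu₂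
    have huv : u ≠ v := Finset.ne_of_mem_erase hu₁
    obtain ⟨e, -, huniq⟩ := hSteiner u v huv
    exact hne ((huniq e₁ ⟨h₁.1, Finset.mem_of_mem_erase hu₁, h₁.2⟩).trans
      (huniq e₂ ⟨h₂.1, Finset.mem_of_mem_erase hu₂, h₂.2⟩).symm)
  have hbU : Ev.biUnion (fun e => e.erase v) = Finset.univ.erase v := by
    apply Finset.ext
    intro u
    simp only [Finset.mem_biUnion, Finset.mem_erase, Finset.mem_univ, and_true]
    constructor
    · rintro ⟨e, -, huv, -⟩
      exact huv
    · intro huv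
      obtain ⟨e, ⟨heH, hue, hve⟩, -⟩ := hSteiner u v huv
      exact ⟨e, by simp [hEv, Finset.mem_filter, heH, hve], huv, hue⟩
  have hcount : Ev.card * (r - 1) = (r - 1) * (k - 1) := by
    have := Finset.card_biUnion hdisj
    rw [hbU] at this
    have hcards : ∑ e ∈ Ev, (e.erase v).card = Ev.card * (r - 1) := by
      rw [Finset.sum_congr rfl (fun e he => ?_), Finset.sum_const, smul_eq_mul]
      have he' : e ∈ H ∧ v ∈ e := Finset.mem_filter.mp he
      rw [Finset.card_erase_of_mem he'.2, huni e he'.1]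
    have hcu : (Finset.univ.erase v).card = (r - 1) * (k - 1) := by
      rw [Finset.card_erase_of_mem (Finset.mem_univ v), Finset.card_univ, hcard]
      simp
    rw [hcards, hcu] at this
    exact this.symm
  have hrpos : 0 < r - 1 := by omega
  have h2 : Ev.card * (r - 1) = (k - 1) * (r - 1) := by rw [hcount, mul_comm]
  exact Nat.eq_of_mul_eq_mul_right hrpos h2

/-- If the Steiner system `S((r-1)(k-1)+1, r, 2)` exists, i.e. an `r`-uniform hypergraph `H`
on `(r-1)(k-1)+1` vertices in which every pair of vertices lies in exactly one hyperedge,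
then `H` contains no Berge copy of the star `S_k`, and `χ_s(H) = (r-1)(k-1)+1`. -/
theorem stmt11 {V : Type*} [Fintype V] (k r : ℕ) (hr : 3 ≤ r) (hk : 2 ≤ k)
    (H : Finset (Finset V))
    (hcard : Fintype.card V = (r - 1) * (k - 1) + 1)
    (huni : ∀ e ∈ H, e.card = r)
    (hSteiner : ∀ u v : V, u ≠ v → ∃! e, e ∈ H ∧ u ∈ e ∧ v ∈ e) :
    ¬ HasBergeCopy (starGraph k) H ∧ strongChrom H = (r - 1) * (k - 1) + 1 := by
  classical
  constructor
  · rintro ⟨φ, hφ, f, hf, hef⟩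
    set v := φ 0 with hv
    have hdeg := steiner_degree k r hr H hcard huni hSteiner v
    -- build k distinct edges containing v
    have hedge : ∀ i : Fin k, s(0, i.succ) ∈ (starGraph k).edgeSet := by
      intro i
      rw [SimpleGraph.mem_edgeSet]
      exact ⟨(Fin.succ_ne_zero i).symm, Or.inl rfl⟩
    set g : Fin k → Finset V := fun i => f ⟨s(0, i.succ), hedge i⟩ with hg
    have hginj : Function.Injective g := by
      intro i j hij
      have := hf hij
      have h2 : s((0 : Fin (k+1)), i.succ) = s(0, j.succ) := congrArg Subtype.val this
      rw [Sym2.eq_iff] at h2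
      rcases h2 with ⟨-, h⟩ | ⟨h, -⟩
      · exact Fin.succ_injective _ h
      · exact absurd h.symm (Fin.succ_ne_zero j)
    have hgmem : ∀ i : Fin k, g i ∈ H.filter (fun e => v ∈ e) := by
      intro i
      obtain ⟨h1, h2⟩ := hef ⟨s(0, i.succ), hedge i⟩
      refine Finset.mem_filter.2 ⟨h1, h2 0 ?_⟩
      exact Sym2.mem_mk_left 0 i.succ
    have hle : k ≤ (H.filter (fun e => v ∈ e)).card := by
      have := Finset.card_le_card_of_injOn (s := Finset.univ) g (fun i _ => hgmem i)
        (fun a _ b _ h => hginj h)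
      simpa using this
    omega
  · have hn := hcard
    set n := (r - 1) * (k - 1) + 1
    have hmem : n ∈ {m | ∃ c : V → Fin m, ∀ e ∈ H, Set.InjOn c (e : Set V)} := by
      refine ⟨fun x => Fin.cast hn (Fintype.equivFin V x), fun e _ => ?_⟩
      intro a _ b _ hab
      exact (Fintype.equivFin V).injective (Fin.cast_injective hn hab)
    have hlb : ∀ m ∈ {m | ∃ c : V → Fin m, ∀ e ∈ H, Set.InjOn c (e : Set V)}, n ≤ m := by
      rintro m ⟨c, hc⟩
      have hcinj : Function.Injective c := by
        intro a b hab
        by_contra hne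
        obtain ⟨e, ⟨heH, hae, hbe⟩, -⟩ := hSteiner a b hne
        exact hne (hc e heH hae hbe hab)
      have := Fintype.card_le_of_injective c hcinj
      rw [hn] at this
      simpa using this
    exact le_antisymm (Nat.sInf_le hmem) (le_csInf ⟨n, hmem⟩ hlb)
end

section
/- If a Berge-P_k-free hypergraph H contains a Berge copy of the cycle C_k, then the set of defining vertices of that Berge C_k forms a connected component of H (no hyperedge contains both a defining vertex and a vertex outside the set, and all defining hyperedges lie inside the set). -/
/-- The hypergraph `H` contains a Berge copy of the path `P_k` with `k` edges:
distinct vertices `v 0, …, v k` and distinct hyperedges `f 0, …, f (k-1)` with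
`{v i, v (i+1)} ⊆ f i`. -/
def HasBergePath {V : Type*} (H : Finset (Finset V)) (k : ℕ) : Prop :=
  ∃ v : Fin (k + 1) → V, Function.Injective v ∧
    ∃ f : Fin k → Finset V, Function.Injective f ∧
      ∀ i : Fin k, f i ∈ H ∧ v i.castSucc ∈ f i ∧ v i.succ ∈ f i

/-- If a Berge-`P_k`-free hypergraph `H` contains a Berge copy of the cycle `C_k`, then the
set of defining vertices of that Berge `C_k` forms a connected component of `H`: any hyperedge
of `H` meeting this set is entirely contained in it. -/
theorem stmt14 {V : Type*} [DecidableEq V] (k : ℕ) (hk : 0 < k)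
    (H : Finset (Finset V)) (hfree : ¬ HasBergePath H k)
    (w : Fin k → V) (e : Fin k → Finset V)
    (hw : Function.Injective w) (he : Function.Injective e)
    (hcyc : ∀ i : Fin k, e i ∈ H ∧ w i ∈ e i ∧
      w ⟨((i : ℕ) + 1) % k, Nat.mod_lt _ hk⟩ ∈ e i) :
    ∀ f ∈ H, (∃ u ∈ f, u ∈ Finset.univ.image w) → f ⊆ Finset.univ.image w := by
  haveI : NeZero k := ⟨hk.ne'⟩
  have hsucc : ∀ m : Fin k,
      (⟨((m : ℕ) + 1) % k, Nat.mod_lt _ hk⟩ : Fin k) = m + 1 := by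
    intro m
    apply Fin.ext
    simp [Fin.add_def, Fin.val_one', Nat.add_mod]
  have hcyc' : ∀ m : Fin k, e m ∈ H ∧ w m ∈ e m ∧ w (m + 1) ∈ e m := by
    intro m
    have := hcyc m
    rwa [hsucc m] at this
  intro f hf hu x hx
  by_contra hxW
  obtain ⟨u, huf, huW⟩ := hu
  obtain ⟨j0, -, hj0⟩ := Finset.mem_image.1 huW
  -- choose j with w j ∈ f and: if f = e m then m + 1 = j
  obtain ⟨j, hjf, hjprop⟩ : ∃ j : Fin k, w j ∈ f ∧ ∀ m : Fin k, e m = f → m + 1 = j := by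
    by_cases hmem : ∃ m, e m = f
    · obtain ⟨m, hm⟩ := hmem
      refine ⟨m + 1, by rw [← hm]; exact (hcyc' m).2.2, ?_⟩
      intro m' hm'
      rw [← hm] at hm'
      rw [he hm']
    · exact ⟨j0, hj0 ▸ huf, fun m hm => absurd ⟨m, hm⟩ hmem⟩
  apply hfree
  refine ⟨Fin.cases x (fun i : Fin k => w (j + i)), ?_,
    fun i : Fin k => if i = 0 then f else e (j + i - 1), ?_, ?_⟩
  · -- injectivity of vertices
    intro a b hab
    induction a using Fin.cases with
    | zero =>
      induction b using Fin.cases with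
      | zero => rfl
      | succ b =>
        simp only [Fin.cases_zero, Fin.cases_succ] at hab
        exact absurd (Finset.mem_image.2 ⟨j + b, Finset.mem_univ _, hab.symm⟩) hxW
    | succ a =>
      induction b using Fin.cases with
      | zero =>
        simp only [Fin.cases_zero, Fin.cases_succ] at hab
        exact absurd (Finset.mem_image.2 ⟨j + a, Finset.mem_univ _, hab⟩) hxW
      | succ b =>
        simp only [Fin.cases_succ] at hab
        have : j + a = j + b := hw hab
        have : a = b := add_left_cancel this
        rw [this]
  · -- injectivity of edges
    intro a b hab
    by_cases ha : a = 0 <;> by_cases hb : b = 0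
    · rw [ha, hb]
    · simp only [ha, hb, if_pos, if_neg, if_true] at hab
      have := hjprop _ hab.symm
      have hb0 : j + b - 1 + 1 = j := this
      have : j + b = j := by
        calc j + b = j + b - 1 + 1 := (sub_add_cancel _ _).symm
        _ = j := hb0
      exact absurd (add_left_cancel (a := j) (by rw [this, add_zero])) hb
    · simp only [ha, hb, if_neg, if_true] at hab
      have := hjprop _ hab
      have ha0 : j + a - 1 + 1 = j := this
      have : j + a = j := by
        calc j + a = j + a - 1 + 1 := (sub_add_cancel _ _).symm
        _ = j := ha0
      exact absurd (add_left_cancel (a := j) (by rw [this, add_zero])) ha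
    · simp only [ha, hb, if_neg] at hab
      have : j + a - 1 = j + b - 1 := he hab
      have h2 : j + a = j + b := by
        calc j + a = j + a - 1 + 1 := (sub_add_cancel _ _).symm
        _ = j + b - 1 + 1 := by rw [this]
        _ = j + b := sub_add_cancel _ _
      exact add_left_cancel h2
  · intro i
    by_cases hi : i = 0
    · subst hi
      refine ⟨by simp [hf], ?_, ?_⟩
      · simp only [Fin.castSucc_zero, Fin.cases_zero, if_pos rfl]
        exact hx
      · simp only [Fin.cases_succ, if_pos rfl, add_zero]
        exact hjf
    · have hmem := hcyc' (j + i - 1)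
      have hcast : (Fin.castSucc i : Fin (k + 1)) =
          Fin.succ ⟨(i : ℕ) - 1, by omega⟩ := by
        apply Fin.ext
        have : (1 : ℕ) ≤ (i : ℕ) := by
          rcases Nat.eq_zero_or_pos (i : ℕ) with h | h
          · exact absurd (Fin.ext h) hi
          · exact h
        simp [Fin.val_succ]
        omega
      have hipos : (1 : ℕ) ≤ (i : ℕ) := by
        rcases Nat.eq_zero_or_pos (i : ℕ) with h | h
        · exact absurd (Fin.ext h) hi
        · exact h
      have hk2 : 1 < k := lt_of_le_of_lt hipos i.isLt
      have hone : (1 : Fin k).val = 1 := by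
        rw [Fin.val_one']; exact Nat.mod_eq_of_lt hk2
      have hsub : (⟨(i : ℕ) - 1, by omega⟩ : Fin k) = i - 1 := by
        rw [eq_sub_iff_add_eq]
        apply Fin.ext
        rw [Fin.add_def, hone]
        simp only
        rw [Nat.sub_add_cancel hipos]
        exact Nat.mod_eq_of_lt i.isLt
      refine ⟨by simp [hi, (hcyc' _).1], ?_, ?_⟩
      · rw [hcast]
        simp only [Fin.cases_succ, if_neg hi, hsub]
        have : j + (i - 1) = j + i - 1 := (add_sub_assoc j i 1).symm
        rw [this]
        exact hmem.2.1
      · simp only [Fin.cases_succ, if_neg hi]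
        have : j + i - 1 + 1 = j + i := sub_add_cancel _ _
        have h2 := hmem.2.2
        rwa [this] at h2
end

section
/- Let k ≥ 3 and let H be a hypergraph whose hyperedges have size 2 or 3, containing no Berge copy of the path P_k with k edges. Then the strong chromatic number of H is at most k. -/
section Aux

variable {V : Type*}

/-- A Berge path of length `m` inside the vertex set `U`, with flexible `ℕ`-indexing. -/
def IsBP (H : Finset (Finset V)) (U : Finset V) (m : ℕ) (v : ℕ → V) (f : ℕ → Finset V) : Prop :=
  (∀ i ≤ m, v i ∈ U) ∧
  (∀ i ≤ m, ∀ j ≤ m, v i = v j → i = j) ∧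
  (∀ i < m, ∀ j < m, f i = f j → i = j) ∧
  (∀ i < m, f i ∈ H ∧ v i ∈ f i ∧ v (i+1) ∈ f i)

lemma IsBP.mono {H : Finset (Finset V)} {U : Finset V} {m m' : ℕ} {v : ℕ → V}
    {f : ℕ → Finset V} (h : IsBP H U m v f) (hm : m' ≤ m) : IsBP H U m' v f := by
  obtain ⟨h1, h2, h3, h4⟩ := h
  exact ⟨fun i hi => h1 i (le_trans hi hm),
    fun i hi j hj => h2 i (le_trans hi hm) j (le_trans hj hm),
    fun i hi j hj => h3 i (lt_of_lt_of_le hi hm) j (lt_of_lt_of_le hj hm),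
    fun i hi => h4 i (lt_of_lt_of_le hi hm)⟩

lemma IsBP.hasBergePath {H : Finset (Finset V)} {U : Finset V} {k : ℕ} {v : ℕ → V}
    {f : ℕ → Finset V} (h : IsBP H U k v f) : HasBergePath H k := by
  obtain ⟨h1, h2, h3, h4⟩ := h
  refine ⟨fun i => v i.val, ?_, fun i => f i.val, ?_, ?_⟩
  · intro i j hij
    exact Fin.ext (h2 i.val (Nat.lt_succ_iff.mp i.isLt) j.val (Nat.lt_succ_iff.mp j.isLt) hij)
  · intro i j hij
    exact Fin.ext (h3 i.val i.isLt j.val j.isLt hij)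
  · intro i
    obtain ⟨he, hv1, hv2⟩ := h4 i.val i.isLt
    exact ⟨he, by simpa using hv1, by simpa [Fin.val_succ] using hv2⟩

lemma IsBP.rev {H : Finset (Finset V)} {U : Finset V} {m : ℕ} {v : ℕ → V}
    {f : ℕ → Finset V} (h : IsBP H U m v f) :
    IsBP H U m (fun i => v (m - i)) (fun i => f (m - 1 - i)) := by
  obtain ⟨h1, h2, h3, h4⟩ := h
  refine ⟨fun i hi => h1 _ (by omega), ?_, ?_, ?_⟩
  · intro i hi j hj hv
    have := h2 (m - i) (by omega) (m - j) (by omega) hv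
    omega
  · intro i hi j hj hf
    have := h3 (m - 1 - i) (by omega) (m - 1 - j) (by omega) hf
    omega
  · intro i hi
    obtain ⟨he, hv1, hv2⟩ := h4 (m - 1 - i) (by omega)
    refine ⟨he, ?_, ?_⟩
    · show v (m - i) ∈ f (m - 1 - i)
      have hh : m - i = (m - 1 - i) + 1 := by omega
      rw [hh]; exact hv2
    · show v (m - (i + 1)) ∈ f (m - 1 - i)
      have hh : m - (i + 1) = m - 1 - i := by omega
      rw [hh]; exact hv1

lemma IsBP.ext_path {H : Finset (Finset V)} {U : Finset V} {m : ℕ} {v : ℕ → V}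
    {f : ℕ → Finset V} (h : IsBP H U m v f) {w : V} {e : Finset V} (hwU : w ∈ U)
    (hw : ∀ i ≤ m, w ≠ v i) (heH : e ∈ H) (hvm : v m ∈ e) (hwe : w ∈ e)
    (hef : ∀ i < m, e ≠ f i) :
    ∃ v' f', IsBP H U (m + 1) v' f' := by
  obtain ⟨h1, h2, h3, h4⟩ := h
  refine ⟨fun i => if i = m + 1 then w else v i, fun i => if i = m then e else f i,
    ?_, ?_, ?_, ?_⟩
  · intro i hi
    show (if i = m + 1 then w else v i) ∈ U
    split_ifs with hc
    · exact hwU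
    · exact h1 i (by omega)
  · intro i hi j hj hv
    have hv' : (if i = m + 1 then w else v i) = (if j = m + 1 then w else v j) := hv
    split_ifs at hv' with hc hd hd
    · omega
    · exact absurd hv' (hw j (by omega))
    · exact absurd hv'.symm (hw i (by omega))
    · exact h2 i (by omega) j (by omega) hv'
  · intro i hi j hj hf
    have hf' : (if i = m then e else f i) = (if j = m then e else f j) := hf
    split_ifs at hf' with hc hd hd
    · omega
    · exact absurd hf' (hef j (by omega))
    · exact absurd hf'.symm (hef i (by omega))
    · exact h3 i (by omega) j (by omega) hf'
  · intro i hi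
    by_cases hc : i = m
    · refine ⟨?_, ?_, ?_⟩
      · show (if i = m then e else f i) ∈ H
        rw [if_pos hc]; exact heH
      · show (if i = m + 1 then w else v i) ∈ (if i = m then e else f i)
        rw [if_pos hc, if_neg (by omega), hc]; exact hvm
      · show (if i + 1 = m + 1 then w else v (i + 1)) ∈ (if i = m then e else f i)
        rw [if_pos hc, if_pos (by omega)]; exact hwe
    · obtain ⟨he, hu1, hu2⟩ := h4 i (by omega)
      refine ⟨?_, ?_, ?_⟩
      · show (if i = m then e else f i) ∈ H
        rw [if_neg hc]; exact he
      · show (if i = m + 1 then w else v i) ∈ (if i = m then e else f i)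
        rw [if_neg hc, if_neg (by omega)]; exact hu1
      · show (if i + 1 = m + 1 then w else v (i + 1)) ∈ (if i = m then e else f i)
        rw [if_neg hc, if_neg (by omega)]; exact hu2

lemma card3 [DecidableEq V] {a b c : V} (h1 : a ≠ b) (h2 : a ≠ c) (h3 : b ≠ c) :
    ({a, b, c} : Finset V).card = 3 := by
  rw [Finset.card_insert_of_notMem (by simp [h1, h2]),
    Finset.card_insert_of_notMem (by simp [h3]), Finset.card_singleton]

lemma card4 [DecidableEq V] {a b c d : V} (h1 : a ≠ b) (h2 : a ≠ c) (h3 : a ≠ d)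
    (h4 : b ≠ c) (h5 : b ≠ d) (h6 : c ≠ d) : ({a, b, c, d} : Finset V).card = 4 := by
  rw [Finset.card_insert_of_notMem (by simp [h1, h2, h3]),
    Finset.card_insert_of_notMem (by simp [h4, h5]),
    Finset.card_insert_of_notMem (by simp [h6]), Finset.card_singleton]

/-- Key structural lemma: if a Berge path of length `m ≥ 1` cannot be extended, then any
hyperedge joining the endpoint `v m` to an off-path vertex `w` must be the last edge of the
path, and must equal `{v (m-1), v m, w}`. -/
lemma key [DecidableEq V] {H : Finset (Finset V)} {U : Finset V}
    (hsize : ∀ e ∈ H, e.card ≤ 3) {m : ℕ} {v : ℕ → V} {f : ℕ → Finset V}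
    (h : IsBP H U m v f) (hm : 1 ≤ m)
    (hmax : ¬ ∃ v' f', IsBP H U (m + 1) v' f')
    {w : V} {e : Finset V} (hwU : w ∈ U) (hw : ∀ i ≤ m, w ≠ v i)
    (heH : e ∈ H) (hvm : v m ∈ e) (hwe : w ∈ e) :
    e = f (m - 1) ∧ e = {v (m - 1), v m, w} := by
  by_cases hef : ∀ i < m, e ≠ f i
  · exact absurd (h.ext_path hwU hw heH hvm hwe hef) hmax
  push_neg at hef
  obtain ⟨i, hi, hei⟩ := hef
  obtain ⟨hBU, hBv, hBf, hBe⟩ := h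
  obtain ⟨_, hvi, hvi1⟩ := hBe i hi
  have vne : ∀ a ≤ m, ∀ b ≤ m, a ≠ b → v a ≠ v b :=
    fun a ha b hb hab hc => hab (hBv a ha b hb hc)
  have hcard := hsize e heH
  have him : i = m - 1 := by
    by_contra hne
    have h4c : ({v i, v (i+1), v m, w} : Finset V).card = 4 :=
      card4 (vne i (by omega) (i+1) (by omega) (by omega))
        (vne i (by omega) m (by omega) (by omega))
        (fun hc => hw i (by omega) hc.symm)
        (vne (i+1) (by omega) m (by omega) (by omega))
        (fun hc => hw (i+1) (by omega) hc.symm)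
        (fun hc => hw m le_rfl hc.symm)
    have hsub : ({v i, v (i+1), v m, w} : Finset V) ⊆ e := by
      intro x hx
      simp only [Finset.mem_insert, Finset.mem_singleton] at hx
      rcases hx with rfl | rfl | rfl | rfl
      · rw [hei]; exact hvi
      · rw [hei]; exact hvi1
      · exact hvm
      · exact hwe
    have := Finset.card_le_card hsub
    omega
  subst him
  refine ⟨hei, ?_⟩
  have h3c : ({v (m-1), v m, w} : Finset V).card = 3 :=
    card3 (vne (m-1) (by omega) m (by omega) (by omega))
      (fun hc => hw (m-1) (by omega) hc.symm)
      (fun hc => hw m le_rfl hc.symm)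
  have hsub : ({v (m-1), v m, w} : Finset V) ⊆ e := by
    intro x hx
    simp only [Finset.mem_insert, Finset.mem_singleton] at hx
    rcases hx with rfl | rfl | rfl
    · rw [hei]; exact hvi
    · exact hvm
    · exact hwe
  exact (Finset.eq_of_subset_of_card_le hsub (by omega)).symm

/-- In a Berge-`P_k`-free hypergraph with edges of size ≤ 3, every nonempty vertex set `U`
contains a vertex with fewer than `k` neighbours inside `U`. -/
lemma degA {k : ℕ} (hk : 3 ≤ k) {H : Finset (Finset V)}
    (hsize : ∀ e ∈ H, e.card ≤ 3) (hfree : ¬ HasBergePath H k)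
    (U : Finset V) (hU : U.Nonempty) :
    ∃ x ∈ U, ∃ D : Finset V,
      (∀ u ∈ U, u ≠ x → (∃ e ∈ H, x ∈ e ∧ u ∈ e) → u ∈ D) ∧ D.card < k := by
  classical
  by_contra hcon
  push_neg at hcon
  set N : V → Finset V := fun x => U.filter (fun u => u ≠ x ∧ ∃ e ∈ H, x ∈ e ∧ u ∈ e)
    with hNdef
  have hmemN : ∀ x u, u ∈ N x ↔ u ∈ U ∧ (u ≠ x ∧ ∃ e ∈ H, x ∈ e ∧ u ∈ e) := by
    intro x u
    simp only [hNdef, Finset.mem_filter]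
  have hdeg : ∀ x ∈ U, k ≤ (N x).card := by
    intro x hx
    exact hcon x hx (N x) (fun u huU hune hsh => (hmemN x u).mpr ⟨huU, hune, hsh⟩)
  -- a maximal Berge path
  have hP0 : ∃ v f, IsBP H U 0 v f := by
    obtain ⟨x, hx⟩ := hU
    exact ⟨fun _ => x, fun _ => (∅ : Finset V),
      fun i _ => hx, fun i hi j hj _ => by omega,
      fun i hi => absurd hi (by omega), fun i hi => absurd hi (by omega)⟩
  have hex : ∃ m, m ≤ k - 1 ∧ (∃ v f, IsBP H U m v f) ∧
      ∀ j, m < j → ¬ ∃ v f, IsBP H U j v f := by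
    have inst : DecidablePred (fun t => ∃ v f, IsBP H U t v f) := Classical.decPred _
    refine ⟨Nat.findGreatest (fun t => ∃ v f, IsBP H U t v f) (k - 1),
      Nat.findGreatest_le _,
      Nat.findGreatest_spec (P := fun t => ∃ v f, IsBP H U t v f) (m := 0) (Nat.zero_le _) hP0, ?_⟩
    intro j hj hPj
    by_cases hjk : j ≤ k - 1
    · exact Nat.findGreatest_is_greatest hj hjk hPj
    · obtain ⟨v, f, hvf⟩ := hPj
      exact hfree ((hvf.mono (by omega)).hasBergePath)
  obtain ⟨m, hmk, ⟨v, f, hvf⟩, hmax⟩ := hex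
  have hmax1 : ¬ ∃ v' f', IsBP H U (m + 1) v' f' := hmax (m + 1) (by omega)
  have hvf' := hvf
  obtain ⟨hBU, hBv, hBf, hBe⟩ := hvf'
  -- m ≥ 1
  have hm1 : 1 ≤ m := by
    by_contra hm0
    have hm0 : m = 0 := by omega
    subst hm0
    have h0 : k ≤ (N (v 0)).card := hdeg _ (hBU 0 le_rfl)
    obtain ⟨u, hu⟩ := Finset.card_pos.mp (by omega : 0 < (N (v 0)).card)
    obtain ⟨huU, hune, e, heH, hve, hue⟩ := (hmemN _ _).mp hu
    exact hmax1 (hvf.ext_path huU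
      (fun i hi => (Nat.le_zero.mp hi).symm ▸ hune)
      heH hve hue (fun i hi => absurd hi (by omega)))
  -- an off-path neighbour w of the endpoint v m
  have hvmU : v m ∈ U := hBU m le_rfl
  have hdvm : k ≤ (N (v m)).card := hdeg _ hvmU
  have hex_off : ∃ w ∈ N (v m), ∀ i ≤ m, w ≠ v i := by
    by_contra hoff
    push_neg at hoff
    have hsub : N (v m) ⊆ (Finset.range m).image v := by
      intro u hu
      obtain ⟨i, hi, hui⟩ := hoff u hu
      have hune : u ≠ v m := ((hmemN _ _).mp hu).2.1
      have him : i < m := by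
        rcases Nat.lt_or_ge i m with h | h
        · exact h
        · exfalso; have : i = m := by omega
          subst this; exact hune hui
      exact Finset.mem_image.mpr ⟨i, Finset.mem_range.mpr him, hui.symm⟩
    have h1 := Finset.card_le_card hsub
    have h2 : ((Finset.range m).image v).card ≤ m :=
      Finset.card_image_le.trans (by simp)
    omega
  obtain ⟨w, hwN, hwoff⟩ := hex_off
  obtain ⟨hwU, hwne, ew, hewH, hvmew, hwew⟩ := (hmemN _ _).mp hwN
  have hkey := key hsize hvf hm1 hmax1 hwU hwoff hewH hvmew hwew
  have hfm : f (m - 1) = {v (m - 1), v m, w} := hkey.1.symm.trans hkey.2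
  -- N (v m) ⊆ insert w (path vertices below m), hence m = k - 1
  have hNsub : N (v m) ⊆ insert w ((Finset.range m).image v) := by
    intro u hu
    obtain ⟨huU, hune, e, heH, hvme, hue⟩ := (hmemN _ _).mp hu
    by_cases hon : ∃ i < m, u = v i
    · obtain ⟨i, hi, hui⟩ := hon
      exact Finset.mem_insert.mpr (Or.inr
        (Finset.mem_image.mpr ⟨i, Finset.mem_range.mpr hi, hui.symm⟩))
    · push_neg at hon
      have huoff : ∀ i ≤ m, u ≠ v i := by
        intro i hi
        rcases Nat.lt_or_ge i m with h | h
        · exact hon i h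
        · have : i = m := by omega
          rw [this]; exact hune
      have hk2 := key hsize hvf hm1 hmax1 huU huoff heH hvme hue
      have hue' : u ∈ f (m - 1) := hk2.1 ▸ hue
      rw [hfm] at hue'
      simp only [Finset.mem_insert, Finset.mem_singleton] at hue'
      rcases hue' with h | h | h
      · exact absurd h (huoff (m-1) (by omega))
      · exact absurd h hune
      · exact Finset.mem_insert.mpr (Or.inl h)
  have hTcard : (insert w ((Finset.range m).image v)).card ≤ m + 1 :=
    (Finset.card_insert_le _ _).trans (by
      have : ((Finset.range m).image v).card ≤ m :=
        Finset.card_image_le.trans (by simp)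
      omega)
  have hNcard := Finset.card_le_card hNsub
  have hmk1 : m = k - 1 := by omega
  have hNeq : N (v m) = insert w ((Finset.range m).image v) :=
    Finset.eq_of_subset_of_card_le hNsub (by omega)
  -- the rotated path Q ending in w
  have hQ : IsBP H U m (fun i => if i = m then w else v i) f := by
    refine ⟨?_, ?_, hBf, ?_⟩
    · intro i hi
      show (if i = m then w else v i) ∈ U
      split_ifs with h
      · exact hwU
      · exact hBU i hi
    · intro i hi j hj hv
      have hv' : (if i = m then w else v i) = (if j = m then w else v j) := hv
      split_ifs at hv' with h h' h'
      · omega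
      · exact absurd hv' (hwoff j hj)
      · exact absurd hv'.symm (hwoff i hi)
      · exact hBv i hi j hj hv'
    · intro i hi
      obtain ⟨he, h1, h2⟩ := hBe i hi
      refine ⟨he, ?_, ?_⟩
      · show (if i = m then w else v i) ∈ f i
        rw [if_neg (by omega)]; exact h1
      · show (if i + 1 = m then w else v (i + 1)) ∈ f i
        by_cases h : i + 1 = m
        · rw [if_pos h]
          have hieq : i = m - 1 := by omega
          rw [hieq, hfm]
          simp
        · rw [if_neg h]; exact h2
  -- N w ⊆ path vertices, hence N w = all of them; in particular v 0 ~ w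
  have hNw : k ≤ (N w).card := hdeg w hwU
  have hNw_sub : N w ⊆ (Finset.range (m + 1)).image v := by
    intro u hu
    obtain ⟨huU, hune, e, heH, hwe', hue⟩ := (hmemN _ _).mp hu
    by_cases hon : ∃ i ≤ m, u = v i
    · obtain ⟨i, hi, hui⟩ := hon
      exact Finset.mem_image.mpr ⟨i, Finset.mem_range.mpr (by omega), hui.symm⟩
    · push_neg at hon
      have huoff : ∀ i ≤ m, u ≠ (fun j => if j = m then w else v j) i := by
        intro i hi
        show u ≠ if i = m then w else v i
        split_ifs with h
        · exact hune
        · exact hon i hi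
      have hk2 := key hsize hQ hm1 hmax1 huU huoff heH
        (show (if m = m then w else v m) ∈ e by rw [if_pos rfl]; exact hwe') hue
      have hue' : u ∈ f (m - 1) := hk2.1 ▸ hue
      rw [hfm] at hue'
      simp only [Finset.mem_insert, Finset.mem_singleton] at hue'
      rcases hue' with h | h | h
      · exact Finset.mem_image.mpr ⟨m - 1, Finset.mem_range.mpr (by omega), h.symm⟩
      · exact Finset.mem_image.mpr ⟨m, Finset.mem_range.mpr (by omega), h.symm⟩
      · exact absurd h hune
  have hScard : ((Finset.range (m + 1)).image v).card ≤ m + 1 :=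
    Finset.card_image_le.trans (by simp)
  have hNweq : N w = (Finset.range (m + 1)).image v :=
    Finset.eq_of_subset_of_card_le hNw_sub (by omega)
  have hv0Nw : v 0 ∈ N w := by
    rw [hNweq]
    exact Finset.mem_image.mpr ⟨0, Finset.mem_range.mpr (by omega), rfl⟩
  obtain ⟨_, hv0w, e0, he0H, hwe0, hv0e0⟩ := (hmemN _ _).mp hv0Nw
  -- reverse path analysis: f 0 = {v 1, v 0, w}
  have hR := hvf.rev
  have hkey3 := key hsize hR hm1 hmax1 hwU
    (fun i hi => hwoff (m - i) (by omega)) he0H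
    (show (fun i => v (m - i)) m ∈ e0 by
      show v (m - m) ∈ e0
      rw [Nat.sub_self]; exact hv0e0) hwe0
  have hf0 : f 0 = {v 1, v 0, w} := by
    have h1 : e0 = f (m - 1 - (m - 1)) := hkey3.1
    have h2 : e0 = {v (m - (m - 1)), v (m - m), w} := hkey3.2
    rw [show m - 1 - (m - 1) = 0 by omega] at h1
    rw [show m - (m - 1) = 1 by omega, show m - m = 0 by omega] at h2
    exact h1.symm.trans h2
  -- v 0 is a neighbour of v m
  have hv0N : v 0 ∈ N (v m) := by
    rw [hNeq]
    exact Finset.mem_insert.mpr (Or.inr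
      (Finset.mem_image.mpr ⟨0, Finset.mem_range.mpr (by omega), rfl⟩))
  obtain ⟨_, hv0vm, e1, he1H, hvme1, hv0e1⟩ := (hmemN _ _).mp hv0N
  by_cases hcase : ∀ i < m, e1 ≠ f i
  · -- extend the reverse of Q by v m : contradiction with maximality
    have hQR := hQ.rev
    refine hmax1 (hQR.ext_path hvmU ?_ he1H ?_ hvme1 ?_)
    · intro i hi
      show v m ≠ if m - i = m then w else v (m - i)
      split_ifs with h
      · exact fun hc => hwne hc.symm
      · intro hc
        have := hBv m le_rfl (m - i) (by omega) hc
        omega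
    · show (if m - m = m then w else v (m - m)) ∈ e1
      rw [Nat.sub_self, if_neg (by omega)]
      exact hv0e1
    · intro i hi
      exact hcase (m - 1 - i) (by omega)
  · push_neg at hcase
    obtain ⟨i, hi, hie⟩ := hcase
    obtain ⟨_, hvie, hvi1e⟩ := hBe i hi
    have he1card := hsize e1 he1H
    have hi0m : i = 0 ∨ i = m - 1 := by
      by_contra hcc
      push_neg at hcc
      obtain ⟨hcc0, hccm⟩ := hcc
      have vne : ∀ a ≤ m, ∀ b ≤ m, a ≠ b → v a ≠ v b :=
        fun a ha b hb hab hc => hab (hBv a ha b hb hc)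
      have h4c : ({v i, v (i+1), v 0, v m} : Finset V).card = 4 :=
        card4 (vne i (by omega) (i+1) (by omega) (by omega))
          (vne i (by omega) 0 (by omega) (by omega))
          (vne i (by omega) m (by omega) (by omega))
          (vne (i+1) (by omega) 0 (by omega) (by omega))
          (vne (i+1) (by omega) m (by omega) (by omega))
          (vne 0 (by omega) m (by omega) (by omega))
      have hsub : ({v i, v (i+1), v 0, v m} : Finset V) ⊆ e1 := by
        intro x hx
        simp only [Finset.mem_insert, Finset.mem_singleton] at hx
        rcases hx with rfl | rfl | rfl | rfl
        · rw [hie]; exact hvie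
        · rw [hie]; exact hvi1e
        · exact hv0e1
        · exact hvme1
      have := Finset.card_le_card hsub
      omega
    rcases hi0m with h | h
    · subst h
      rw [hie, hf0] at hvme1
      simp only [Finset.mem_insert, Finset.mem_singleton] at hvme1
      rcases hvme1 with h | h | h
      · have := hBv m le_rfl 1 (by omega) h
        omega
      · have := hBv m le_rfl 0 (by omega) h
        omega
      · exact hwne h.symm
    · rw [hie, h, hfm] at hv0e1
      simp only [Finset.mem_insert, Finset.mem_singleton] at hv0e1
      rcases hv0e1 with hx | hx | hx
      · have := hBv 0 (by omega) (m-1) (by omega) hx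
        omega
      · have := hBv 0 (by omega) m le_rfl hx
        omega
      · exact hv0w hx

/-- Greedy colouring by induction on the vertex set. -/
lemma colorAux {k : ℕ} (hk : 3 ≤ k) (H : Finset (Finset V))
    (hsize : ∀ e ∈ H, e.card ≤ 3) (hfree : ¬ HasBergePath H k) :
    ∀ n (U : Finset V), U.card ≤ n →
      ∃ c : V → Fin k, ∀ e ∈ H, ∀ a ∈ e, a ∈ U → ∀ b ∈ e, b ∈ U → c a = c b → a = b := by
  intro n
  induction n with
  | zero =>
    intro U hU
    have hUe : U = ∅ := Finset.card_eq_zero.mp (Nat.le_zero.mp hU)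
    subst hUe
    exact ⟨fun _ => ⟨0, by omega⟩, by simp⟩
  | succ n ih =>
    intro U hU
    rcases U.eq_empty_or_nonempty with rfl | hUne
    · exact ⟨fun _ => ⟨0, by omega⟩, by simp⟩
    · classical
      obtain ⟨x, hxU, D, hD, hDsmall⟩ := degA hk hsize hfree U hUne
      obtain ⟨c, hc⟩ := ih (U.erase x) (by
        have h1 := Finset.card_erase_of_mem hxU
        have h2 := Finset.card_pos.mpr hUne
        omega)
      have hfresh : ∃ y : Fin k, y ∉ D.image c := by
        by_contra hall
        push_neg at hall
        have hsub : (Finset.univ : Finset (Fin k)) ⊆ D.image c := fun y _ => hall y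
        have h1 := Finset.card_le_card hsub
        have h2 : (D.image c).card ≤ D.card := Finset.card_image_le
        rw [Finset.card_univ, Fintype.card_fin] at h1
        omega
      obtain ⟨y, hy⟩ := hfresh
      refine ⟨Function.update c x y, ?_⟩
      intro e heH a ha haU b hb hbU hab
      by_cases hax : a = x <;> by_cases hbx : b = x
      · rw [hax, hbx]
      · exfalso
        subst hax
        rw [Function.update_self, Function.update_of_ne hbx] at hab
        exact hy (Finset.mem_image.mpr ⟨b, hD b hbU hbx ⟨e, heH, ha, hb⟩, hab.symm⟩)
      · exfalso
        subst hbx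
        rw [Function.update_self, Function.update_of_ne hax] at hab
        exact hy (Finset.mem_image.mpr ⟨a, hD a haU hax ⟨e, heH, hb, ha⟩, hab⟩)
      · rw [Function.update_of_ne hax, Function.update_of_ne hbx] at hab
        exact hc e heH a ha (Finset.mem_erase.mpr ⟨hax, haU⟩)
          b hb (Finset.mem_erase.mpr ⟨hbx, hbU⟩) hab

end Aux

/-- Let `k ≥ 3` and let `H` be a hypergraph whose hyperedges have size 2 or 3, containing no
Berge copy of the path `P_k` with `k` edges. Then `χ_s(H) ≤ k`. -/
theorem stmt15 {V : Type*} [Fintype V] (k : ℕ) (hk : 3 ≤ k)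
    (H : Finset (Finset V)) (hsize : ∀ e ∈ H, e.card = 2 ∨ e.card = 3)
    (hfree : ¬ HasBergePath H k) :
    strongChrom H ≤ k := by
  have hsize' : ∀ e ∈ H, e.card ≤ 3 := fun e he => by rcases hsize e he with h | h <;> omega
  obtain ⟨c, hc⟩ := colorAux hk H hsize' hfree (Finset.univ : Finset V).card Finset.univ le_rfl
  refine Nat.sInf_le ?_
  refine ⟨c, fun e he => ?_⟩
  intro a ha b hb hab
  exact hc e he a ha (Finset.mem_univ _) b hb (Finset.mem_univ _) hab
end

section
/- Let H be an at most 4-uniform hypergraph (hyperedges of size between 2 and 4) without a Berge copy of the path P_k with k edges. Then the strong chromatic number of H is at most k + 9. -/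
noncomputable section
open Finset
open scoped Classical

namespace Berge18

variable {V : Type*}

/-- ℕ-indexed Berge path: vertices `w 0, ..., w t`, edges `f 1, ..., f t` with
`w (i-1), w i ∈ f i`. -/
structure NPath (H : Finset (Finset V)) (t : ℕ) (w : ℕ → V) (f : ℕ → Finset V) : Prop where
  winj : ∀ i, i ≤ t → ∀ j, j ≤ t → w i = w j → i = j
  finj : ∀ i, 1 ≤ i → i ≤ t → ∀ j, 1 ≤ j → j ≤ t → f i = f j → i = j
  fH : ∀ i, 1 ≤ i → i ≤ t → f i ∈ H
  adj1 : ∀ i, 1 ≤ i → i ≤ t → w (i-1) ∈ f i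
  adj2 : ∀ i, 1 ≤ i → i ≤ t → w i ∈ f i

lemma NPath.mono {H : Finset (Finset V)} {t w f} (h : NPath H t w f) {s : ℕ} (hst : s ≤ t) :
    NPath H s w f := by
  refine ⟨?_, ?_, ?_, ?_, ?_⟩
  · intro i hi j hj; exact h.winj i (by omega) j (by omega)
  · intro i h1 h2 j h3 h4; exact h.finj i h1 (by omega) j h3 (by omega)
  · intro i h1 h2; exact h.fH i h1 (by omega)
  · intro i h1 h2; exact h.adj1 i h1 (by omega)
  · intro i h1 h2; exact h.adj2 i h1 (by omega)

/-- Shadow neighbours of a vertex. -/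
def nbrs [Fintype V] (H : Finset (Finset V)) (v : V) : Finset V :=
  univ.filter fun u => u ≠ v ∧ ∃ e ∈ H, v ∈ e ∧ u ∈ e

lemma mem_nbrs [Fintype V] {H : Finset (Finset V)} {v u : V} :
    u ∈ nbrs H v ↔ u ≠ v ∧ ∃ e ∈ H, v ∈ e ∧ u ∈ e := by
  simp [nbrs]

lemma card_vset {H : Finset (Finset V)} {t w f} (hp : NPath H t w f) :
    ((range (t+1)).image w).card = t + 1 := by
  rw [card_image_of_injOn, card_range]
  intro i hi j hj hij
  exact hp.winj i (by simpa [Nat.lt_succ_iff] using hi) j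
    (by simpa [Nat.lt_succ_iff] using hj) hij

lemma mem_vset {t : ℕ} {w : ℕ → V} {u : V} :
    u ∈ (range (t+1)).image w ↔ ∃ j, j ≤ t ∧ w j = u := by
  simp [mem_image, Nat.lt_succ_iff]

/-- Extension construction. -/
lemma c0 {H : Finset (Finset V)} {t w f} (hp : NPath H t w f) (e : Finset V) (he : e ∈ H)
    (hye : w t ∈ e) (hfr : ∀ i, 1 ≤ i → i ≤ t → f i ≠ e)
    (u : V) (hu : u ∈ e) (hunw : ∀ j, j ≤ t → u ≠ w j) :
    NPath H (t+1) (fun j => if j = t+1 then u else w j) (fun j => if j = t+1 then e else f j) := by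
  refine ⟨?_, ?_, ?_, ?_, ?_⟩
  · intro i hi j hj hij
    rcases eq_or_ne i (t+1) with hi' | hi' <;> rcases eq_or_ne j (t+1) with hj' | hj'
    · omega
    · rw [hi', if_pos rfl, if_neg hj'] at hij
      exact absurd hij (hunw j (by omega))
    · rw [hj', if_pos rfl, if_neg hi'] at hij
      exact absurd hij.symm (hunw i (by omega))
    · rw [if_neg hi', if_neg hj'] at hij
      exact hp.winj i (by omega) j (by omega) hij
  · intro i h1 h2 j h3 h4 hij
    rcases eq_or_ne i (t+1) with hi' | hi' <;> rcases eq_or_ne j (t+1) with hj' | hj'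
    · omega
    · rw [hi', if_pos rfl, if_neg hj'] at hij
      exact absurd hij.symm (hfr j h3 (by omega))
    · rw [hj', if_pos rfl, if_neg hi'] at hij
      exact absurd hij (hfr i h1 (by omega))
    · rw [if_neg hi', if_neg hj'] at hij
      exact hp.finj i h1 (by omega) j h3 (by omega) hij
  · intro i h1 h2
    rcases eq_or_ne i (t+1) with hi' | hi'
    · rw [hi', if_pos rfl]; exact he
    · rw [if_neg hi']; exact hp.fH i h1 (by omega)
  · intro i h1 h2
    rcases eq_or_ne i (t+1) with hi' | hi'
    · subst hi'
      rw [show t+1-1 = t by omega, if_neg (by omega : ¬ (t = t+1)), if_pos rfl]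
      exact hye
    · rw [if_neg hi', if_neg (by omega : ¬ (i - 1 = t+1))]
      exact hp.adj1 i h1 (by omega)
  · intro i h1 h2
    rcases eq_or_ne i (t+1) with hi' | hi'
    · rw [hi', if_pos rfl, if_pos rfl]; exact hu
    · rw [if_neg hi', if_neg hi']; exact hp.adj2 i h1 (by omega)

/-- Non-extendability: all vertices of a fresh edge at the endpoint of a longest path
lie on the path. -/
lemma nonext {H : Finset (Finset V)} {t w f}
    (hmax : ∀ w' f', ¬ NPath H (t+1) w' f') (hp : NPath H t w f)
    (e : Finset V) (he : e ∈ H) (hye : w t ∈ e)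
    (hfr : ∀ i, 1 ≤ i → i ≤ t → f i ≠ e) :
    ∀ u ∈ e, ∃ j, j ≤ t ∧ w j = u := by
  intro u hu
  by_contra hc
  push_neg at hc
  exact hmax _ _ (c0 hp e he hye hfr u hu (fun j hj h => (hc j hj) h.symm))

lemma c12 {H : Finset (Finset V)} {t w f} (hp : NPath H t w f) (p : ℕ) (hpt : p + 1 ≤ t)
    (e : Finset V) (he : e ∈ H) (hxe : w t ∈ e) (hpe : w p ∈ e)
    (hcase : e = f (p+1) ∨ ∀ i, 1 ≤ i → i ≤ t → f i ≠ e) :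
    ∃ w' f', NPath H t w' f' ∧ w' t = w (p+1)
      ∧ (range (t+1)).image w' = (range (t+1)).image w
      ∧ (Icc 1 t).image f' ⊆ insert e ((Icc 1 t).image f) := by
  refine ⟨fun j => if j ≤ p then w j else w (t + p + 1 - j),
    fun j => if j ≤ p then f j else if j = p+1 then e else f (t + p + 2 - j),
    ⟨?_, ?_, ?_, ?_, ?_⟩, ?_, ?_, ?_⟩
  · -- winj
    intro i hi j hj hij
    by_cases hi' : i ≤ p <;> by_cases hj' : j ≤ p
    · rw [if_pos hi', if_pos hj'] at hij
      exact hp.winj i (by omega) j (by omega) hij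
    · rw [if_pos hi', if_neg hj'] at hij
      have := hp.winj i (by omega) (t+p+1-j) (by omega) hij; omega
    · rw [if_neg hi', if_pos hj'] at hij
      have := hp.winj (t+p+1-i) (by omega) j (by omega) hij; omega
    · rw [if_neg hi', if_neg hj'] at hij
      have := hp.winj (t+p+1-i) (by omega) (t+p+1-j) (by omega) hij; omega
  · -- finj
    intro i h1 h2 j h3 h4 hij
    by_cases hi : i ≤ p <;> by_cases hj : j ≤ p
    · rw [if_pos hi, if_pos hj] at hij
      exact hp.finj i h1 (by omega) j h3 (by omega) hij
    · rw [if_pos hi, if_neg hj] at hij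
      by_cases hj' : j = p+1
      · rw [if_pos hj'] at hij
        rcases hcase with hc | hc
        · have := hp.finj i h1 (by omega) (p+1) (by omega) hpt (hij.trans hc)
          omega
        · exact absurd hij (hc i h1 (by omega))
      · rw [if_neg hj'] at hij
        have := hp.finj i h1 (by omega) (t+p+2-j) (by omega) (by omega) hij
        omega
    · rw [if_pos hj, if_neg hi] at hij
      by_cases hi' : i = p+1
      · rw [if_pos hi'] at hij
        rcases hcase with hc | hc
        · have := hp.finj (p+1) (by omega) hpt j h3 (by omega) (hc.symm.trans hij)
          omega
        · exact absurd hij.symm (hc j h3 (by omega))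
      · rw [if_neg hi'] at hij
        have := hp.finj (t+p+2-i) (by omega) (by omega) j h3 (by omega) hij
        omega
    · rw [if_neg hi, if_neg hj] at hij
      by_cases hi' : i = p+1 <;> by_cases hj' : j = p+1
      · omega
      · rw [if_pos hi', if_neg hj'] at hij
        rcases hcase with hc | hc
        · have := hp.finj (p+1) (by omega) hpt (t+p+2-j) (by omega) (by omega)
            (hc.symm.trans hij)
          omega
        · exact absurd hij.symm (hc (t+p+2-j) (by omega) (by omega))
      · rw [if_pos hj', if_neg hi'] at hij
        rcases hcase with hc | hc
        · have := hp.finj (t+p+2-i) (by omega) (by omega) (p+1) (by omega) hpt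
            (hij.trans hc)
          omega
        · exact absurd hij (hc (t+p+2-i) (by omega) (by omega))
      · rw [if_neg hi', if_neg hj'] at hij
        have := hp.finj (t+p+2-i) (by omega) (by omega) (t+p+2-j) (by omega) (by omega) hij
        omega
  · -- fH
    intro i h1 h2
    by_cases hi : i ≤ p
    · rw [if_pos hi]; exact hp.fH i h1 (by omega)
    · by_cases hi' : i = p+1
      · rw [if_neg hi, if_pos hi']; exact he
      · rw [if_neg hi, if_neg hi']; exact hp.fH _ (by omega) (by omega)
  · -- adj1
    intro i h1 h2
    by_cases hi : i ≤ p
    · rw [if_pos hi, if_pos (by omega : i - 1 ≤ p)]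
      exact hp.adj1 i h1 (by omega)
    · by_cases hi' : i = p+1
      · rw [if_neg hi, if_pos hi', if_pos (by omega : i - 1 ≤ p), show i - 1 = p by omega]
        exact hpe
      · rw [if_neg hi, if_neg hi', if_neg (by omega : ¬ (i - 1 ≤ p)),
          show t+p+1-(i-1) = t+p+2-i by omega]
        exact hp.adj2 (t+p+2-i) (by omega) (by omega)
  · -- adj2
    intro i h1 h2
    by_cases hi : i ≤ p
    · rw [if_pos hi, if_pos hi]
      exact hp.adj2 i h1 (by omega)
    · by_cases hi' : i = p+1
      · rw [if_neg hi, if_pos hi', if_neg hi, show t+p+1-i = t by omega]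
        exact hxe
      · rw [if_neg hi, if_neg hi', if_neg hi, show t+p+1-i = (t+p+2-i) - 1 by omega]
        exact hp.adj1 (t+p+2-i) (by omega) (by omega)
  · -- endpoint
    dsimp only
    rw [if_neg (by omega : ¬ t ≤ p), show t+p+1-t = p+1 by omega]
  · -- vertex set
    ext u
    simp only [mem_image, mem_range, Nat.lt_succ_iff]
    constructor
    · rintro ⟨j, hj, rfl⟩
      by_cases hjp : j ≤ p
      · exact ⟨j, hj, by rw [if_pos hjp]⟩
      · exact ⟨t+p+1-j, by omega, by rw [if_neg hjp]⟩
    · rintro ⟨j, hj, rfl⟩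
      by_cases hjp : j ≤ p
      · exact ⟨j, hj, by rw [if_pos hjp]⟩
      · refine ⟨t + p + 1 - j, by omega, ?_⟩
        rw [if_neg (by omega : ¬ (t + p + 1 - j ≤ p)), show t+p+1-(t+p+1-j) = j by omega]
  · -- edge set
    intro E hE
    simp only [mem_image] at hE
    obtain ⟨j, hj, rfl⟩ := hE
    simp only [mem_Icc] at hj
    by_cases hjp : j ≤ p
    · rw [if_pos hjp]
      exact mem_insert_of_mem (mem_image.mpr ⟨j, mem_Icc.mpr ⟨hj.1, by omega⟩, rfl⟩)
    · by_cases hj' : j = p+1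
      · rw [if_neg hjp, if_pos hj']
        exact mem_insert_self _ _
      · rw [if_neg hjp, if_neg hj']
        exact mem_insert_of_mem (mem_image.mpr ⟨t+p+2-j, mem_Icc.mpr ⟨by omega, by omega⟩, rfl⟩)



lemma card_piece {E W T : Finset V} (hTW : T ⊆ W) (hTE : T ⊆ E) :
    (E \ W).card + T.card ≤ E.card := by
  have hdisj : Disjoint (E \ W) T := by
    refine disjoint_left.mpr ?_
    intro a ha haT
    exact (mem_sdiff.mp ha).2 (hTW haT)
  calc (E \ W).card + T.card = ((E \ W) ∪ T).card := (card_union_of_disjoint hdisj).symm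
    _ ≤ E.card := card_le_card (union_subset (sdiff_subset) hTE)

lemma card_triple (a b c : V) (hab : a ≠ b) (hac : a ≠ c) (hbc : b ≠ c) :
    ({a, b, c} : Finset V).card = 3 := by
  rw [card_insert_of_notMem (by simp [hab, hac]), card_insert_of_notMem (by simp [hbc]),
    card_singleton]

lemma card_pair (a b : V) (hab : a ≠ b) : ({a, b} : Finset V).card = 2 := by
  rw [card_insert_of_notMem (by simp [hab]), card_singleton]

/-- Endpoint counting lemma: the endpoint of any longest path on the vertex set `W`,
whose edge family differs from the base family in at most one edge, lies in at least 5
"D-edges" of the base family. -/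
lemma endpt [Fintype V] {H : Finset (Finset V)} {t : ℕ} {w w' : ℕ → V} {f f' : ℕ → Finset V}
    (hsz : ∀ e ∈ H, e.card ≤ 4) (ht : 1 ≤ t)
    (hmax : ∀ w'' f'', ¬ NPath H (t+1) w'' f'')
    (hbase : NPath H t w f)
    (hp : NPath H t w' f')
    (himg : (range (t+1)).image w' = (range (t+1)).image w)
    (hfam : (((Icc 1 t).image f') \ ((Icc 1 t).image f)).card ≤ 1)
    (hdegW : ∀ v ∈ (range (t+1)).image w, t + 10 ≤ (nbrs H v).card) :
    5 ≤ (((Icc 1 t).image f).filter (fun E => w' t ∈ E ∧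
        (E \ (range (t+1)).image w).Nonempty ∧
        ∀ i, 1 ≤ i → i ≤ t → E = f i → (w' t ≠ w (i-1) ∧ w' t ≠ w i))).card := by
  set W : Finset V := (range (t+1)).image w with hW
  set y : V := w' t with hy
  have hmemW : ∀ j, j ≤ t → w' j ∈ W := by
    intro j hj
    rw [← himg]
    exact mem_vset.mpr ⟨j, hj, rfl⟩
  have hyW : y ∈ W := hmemW t le_rfl
  have hcardW : W.card = t + 1 := card_vset hbase
  -- off-path neighbours
  set offN : Finset V := nbrs H y \ W with hoffN
  have h10 : 10 ≤ offN.card := by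
    have hsub : nbrs H y ⊆ offN ∪ W.erase y := by
      intro u hu
      by_cases huW : u ∈ W
      · exact mem_union_right _ (mem_erase.mpr ⟨(mem_nbrs.mp hu).1, huW⟩)
      · exact mem_union_left _ (mem_sdiff.mpr ⟨hu, huW⟩)
    have h1 : (nbrs H y).card ≤ offN.card + (W.erase y).card :=
      le_trans (card_le_card hsub) (card_union_le _ _)
    have h2 : (W.erase y).card = t := by
      rw [card_erase_of_mem hyW, hcardW]
      omega
    have h3 := hdegW y hyW
    omega
  -- witnesses come from the family of the path
  have hwit : ∀ b ∈ offN, ∃ i, 1 ≤ i ∧ i ≤ t ∧ y ∈ f' i ∧ b ∈ f' i := by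
    intro b hb
    obtain ⟨hbny, hbW⟩ := mem_sdiff.mp hb
    obtain ⟨hbne, e, he, hye, hbe⟩ := mem_nbrs.mp hbny
    have hef : ∃ i, 1 ≤ i ∧ i ≤ t ∧ f' i = e := by
      by_contra hc
      push_neg at hc
      have hfr : ∀ i, 1 ≤ i → i ≤ t → f' i ≠ e := fun i h1 h2 => hc i h1 h2
      obtain ⟨j, hj, hwj⟩ := nonext hmax hp e he hye hfr b hbe
      exact hbW (by rw [← himg]; exact mem_vset.mpr ⟨j, hj, hwj⟩)
    obtain ⟨i, h1, h2, rfl⟩ := hef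
    exact ⟨i, h1, h2, hye, hbe⟩
  -- the non-last edges with off-path slots
  set ENL : Finset (Finset V) :=
    ((Icc 1 (t-1)).image f').filter (fun E => y ∈ E ∧ (E \ W).Nonempty) with hENL
  have hsuboff : offN ⊆ (f' t \ W) ∪ ENL.biUnion (fun E => E \ W) := by
    intro b hb
    obtain ⟨i, h1, h2, hyi, hbi⟩ := hwit b hb
    have hbW : b ∉ W := (mem_sdiff.mp hb).2
    rcases eq_or_ne i t with rfl | hne
    · exact mem_union_left _ (mem_sdiff.mpr ⟨hbi, hbW⟩)
    · refine mem_union_right _ (mem_biUnion.mpr ⟨f' i, ?_, mem_sdiff.mpr ⟨hbi, hbW⟩⟩)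
      refine mem_filter.mpr ⟨mem_image.mpr ⟨i, mem_Icc.mpr ⟨h1, by omega⟩, rfl⟩,
        hyi, ⟨b, mem_sdiff.mpr ⟨hbi, hbW⟩⟩⟩
  have hft2 : (f' t \ W).card ≤ 2 := by
    have hmem1 : w' (t-1) ∈ f' t := hp.adj1 t ht le_rfl
    have hmem2 : y ∈ f' t := hp.adj2 t ht le_rfl
    have hne12 : w' (t-1) ≠ y := by
      intro h
      have := hp.winj (t-1) (by omega) t le_rfl h
      omega
    have hpc := card_piece (E := f' t) (W := W) (T := {w' (t-1), y})
      (by intro a ha; rcases mem_insert.mp ha with rfl | ha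
          · exact hmemW (t-1) (by omega)
          · rw [mem_singleton.mp ha]; exact hyW)
      (by intro a ha; rcases mem_insert.mp ha with rfl | ha
          · exact hmem1
          · rw [mem_singleton.mp ha]; exact hmem2)
    rw [card_pair _ _ hne12] at hpc
    have := hsz (f' t) (hp.fH t ht le_rfl)
    omega
  have hENL1 : ∀ E ∈ ENL, (E \ W).card ≤ 1 := by
    intro E hE
    obtain ⟨hEim, hyE, -⟩ := mem_filter.mp hE
    obtain ⟨i, hiIcc, rfl⟩ := mem_image.mp hEim
    rw [mem_Icc] at hiIcc
    have h1 := hiIcc.1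
    have h2 : i ≤ t - 1 := hiIcc.2
    have hm1 : w' (i-1) ∈ f' i := hp.adj1 i h1 (by omega)
    have hm2 : w' i ∈ f' i := hp.adj2 i h1 (by omega)
    have hne12 : w' (i-1) ≠ w' i := by
      intro h; have := hp.winj (i-1) (by omega) i (by omega) h; omega
    have hne13 : w' (i-1) ≠ y := by
      intro h; have := hp.winj (i-1) (by omega) t le_rfl h; omega
    have hne23 : w' i ≠ y := by
      intro h; have := hp.winj i (by omega) t le_rfl h; omega
    have hpc := card_piece (E := f' i) (W := W) (T := {w' (i-1), w' i, y})
      (by intro a ha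
          rcases mem_insert.mp ha with rfl | ha
          · exact hmemW (i-1) (by omega)
          rcases mem_insert.mp ha with rfl | ha
          · exact hmemW i (by omega)
          · rw [mem_singleton.mp ha]; exact hyW)
      (by intro a ha
          rcases mem_insert.mp ha with rfl | ha
          · exact hm1
          rcases mem_insert.mp ha with rfl | ha
          · exact hm2
          · rw [mem_singleton.mp ha]; exact hyE)
    rw [card_triple _ _ _ hne12 hne13 hne23] at hpc
    have := hsz (f' i) (hp.fH i h1 (by omega))
    omega
  have hENLc : 8 ≤ ENL.card := by
    have h1 : offN.card ≤ (f' t \ W).card + (ENL.biUnion (fun E => E \ W)).card :=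
      le_trans (card_le_card hsuboff) (card_union_le _ _)
    have h2 : (ENL.biUnion (fun E => E \ W)).card ≤ ∑ E ∈ ENL, (E \ W).card :=
      card_biUnion_le
    have h3 : ∑ E ∈ ENL, (E \ W).card ≤ ∑ _E ∈ ENL, 1 := sum_le_sum hENL1
    have h4 : ∑ _E ∈ ENL, 1 = ENL.card := by simp
    omega
  -- bad edges: the two base-path edges at y, plus the at most one non-base edge
  obtain ⟨q, hq, hwq⟩ := mem_vset.mp hyW
  set BAD : Finset (Finset V) :=
    (insert (f q) {f (q+1)}) ∪ (((Icc 1 t).image f') \ ((Icc 1 t).image f)) with hBAD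
  have hBADc : BAD.card ≤ 3 := by
    have h1 : (insert (f q) ({f (q+1)} : Finset (Finset V))).card ≤ 2 := by
      refine le_trans (card_insert_le _ _) ?_
      simp
    calc BAD.card ≤ (insert (f q) ({f (q+1)} : Finset (Finset V))).card +
        (((Icc 1 t).image f') \ ((Icc 1 t).image f)).card := card_union_le _ _
      _ ≤ 3 := by omega
  have hgood : ENL \ BAD ⊆ (((Icc 1 t).image f).filter (fun E => y ∈ E ∧
      (E \ W).Nonempty ∧ ∀ i, 1 ≤ i → i ≤ t → E = f i → (y ≠ w (i-1) ∧ y ≠ w i))) := by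
    intro E hE
    obtain ⟨hE1, hE2⟩ := mem_sdiff.mp hE
    obtain ⟨hEim, hyE, hEoff⟩ := mem_filter.mp hE1
    have hEim' : E ∈ (Icc 1 t).image f' := by
      obtain ⟨i, hiIcc, rfl⟩ := mem_image.mp hEim
      rw [mem_Icc] at hiIcc
      exact mem_image.mpr ⟨i, mem_Icc.mpr ⟨hiIcc.1, by omega⟩, rfl⟩
    have hEbase : E ∈ (Icc 1 t).image f := by
      by_contra hc
      exact hE2 (mem_union_right _ (mem_sdiff.mpr ⟨hEim', hc⟩))
    refine (@mem_filter _ _ (fun _ => @instDecidableAnd _ _ _ (@instDecidableAnd _ _ _ (Classical.propDecidable _))) _ _).mpr ⟨hEbase, hyE, hEoff, ?_⟩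
    intro i h1 h2 hEfi
    constructor
    · intro hcontra
      have hiq : q = i - 1 := hbase.winj q hq (i-1) (by omega) (by rw [hwq, hcontra])
      have : E = f (q+1) := by rw [hEfi]; congr 1; omega
      exact hE2 (mem_union_left _ (by rw [this]; simp))
    · intro hcontra
      have hiq : q = i := hbase.winj q hq i (by omega) (by rw [hwq, hcontra])
      have : E = f q := by rw [hEfi, hiq]
      exact hE2 (mem_union_left _ (by rw [this]; simp))
  have hfinal : 5 ≤ (ENL \ BAD).card := by
    have h1 : ENL.card ≤ (ENL \ BAD).card + BAD.card := by
      have : ENL ⊆ (ENL \ BAD) ∪ BAD := by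
        intro E hE
        by_cases hEB : E ∈ BAD
        · exact mem_union_right _ hEB
        · exact mem_union_left _ (mem_sdiff.mpr ⟨hE, hEB⟩)
      exact le_trans (card_le_card this) (card_union_le _ _)
    omega
  exact le_trans hfinal (card_le_card hgood)


lemma card_three_pieces {E W T : Finset V} (hTW : T ⊆ W) (hTE : T ⊆ E) :
    (E \ W).card + ((E ∩ W) \ T).card + T.card ≤ E.card := by
  have hd1 : Disjoint (E \ W) ((E ∩ W) \ T) := by
    refine disjoint_left.mpr ?_
    intro a ha haB
    exact (mem_sdiff.mp ha).2 (mem_inter.mp (mem_sdiff.mp haB).1).2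
  have hd2 : Disjoint ((E \ W) ∪ ((E ∩ W) \ T)) T := by
    refine disjoint_left.mpr ?_
    intro a ha haT
    rcases mem_union.mp ha with h | h
    · exact (mem_sdiff.mp h).2 (hTW haT)
    · exact (mem_sdiff.mp h).2 haT
  calc (E \ W).card + ((E ∩ W) \ T).card + T.card
      = ((E \ W) ∪ ((E ∩ W) \ T)).card + T.card := by rw [card_union_of_disjoint hd1]
    _ = (((E \ W) ∪ ((E ∩ W) \ T)) ∪ T).card := (card_union_of_disjoint hd2).symm
    _ ≤ E.card := by
        refine card_le_card ?_
        refine union_subset (union_subset sdiff_subset ?_) hTE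
        exact fun a ha => (mem_inter.mp (mem_sdiff.mp ha).1).1

lemma card_quint (a b c d e : V) (hab : a ≠ b) (hac : a ≠ c) (had : a ≠ d) (hae : a ≠ e)
    (hbc : b ≠ c) (hbd : b ≠ d) (hbe : b ≠ e) (hcd : c ≠ d) (hce : c ≠ e) (hde : d ≠ e) :
    ({a, b, c, d, e} : Finset V).card = 5 := by
  rw [card_insert_of_notMem (by simp [hab, hac, had, hae]),
    card_insert_of_notMem (by simp [hbc, hbd, hbe]),
    card_insert_of_notMem (by simp [hcd, hce]),
    card_insert_of_notMem (by simp [hde]), card_singleton]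

/-- Core degeneracy lemma: if `H` has all edges of size ≤ 4 contained in `S`,
no Berge path with `k` edges, and `S` is nonempty, then some vertex of `S` has
shadow degree at most `k + 8`. -/
lemma core [Fintype V] (H : Finset (Finset V)) (k : ℕ) (hk : 1 ≤ k)
    (hsz : ∀ e ∈ H, e.card ≤ 4)
    (hfree : ¬ ∃ w f, NPath H k w f)
    (S : Finset V) (hne : S.Nonempty) (hsub : ∀ e ∈ H, e ⊆ S) :
    ∃ v ∈ S, (nbrs H v).card ≤ k + 8 := by
  by_contra hcon
  push_neg at hcon
  have hdeg : ∀ v ∈ S, k + 9 ≤ (nbrs H v).card := fun v hv => hcon v hv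
  -- a path of length 1 exists
  obtain ⟨v₀, hv₀⟩ := hne
  have hv₀n : (nbrs H v₀).Nonempty := by
    rw [← card_pos]
    have := hdeg v₀ hv₀
    omega
  obtain ⟨u₀, hu₀⟩ := hv₀n
  obtain ⟨hu₀ne, e₀, he₀, hv₀e, hue⟩ := mem_nbrs.mp hu₀
  have path1 : NPath H 1 (fun j => if j = 0 then v₀ else u₀) (fun _ => e₀) := by
    refine ⟨?_, ?_, ?_, ?_, ?_⟩
    · intro i hi j hj hij
      interval_cases i <;> interval_cases j <;> simp_all
    · intro i h1 h2 j h3 h4 _; omega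
    · intro i _ _; exact he₀
    · intro i h1 h2
      have : i = 1 := by omega
      subst this
      simpa using hv₀e
    · intro i h1 h2
      have : i = 1 := by omega
      subst this
      simpa using hue
  -- longest path
  set L : Set ℕ := {n | ∃ w f, NPath H n w f} with hL
  have h1L : 1 ∈ L := ⟨_, _, path1⟩
  have hbdd : BddAbove L := by
    refine ⟨Fintype.card V, ?_⟩
    rintro n ⟨w, f, hp⟩
    have h1 : ((range (n+1)).image w).card = n + 1 := card_vset hp
    have h2 : ((range (n+1)).image w).card ≤ Fintype.card V := by
      rw [← Finset.card_univ]
      exact card_le_card (subset_univ _)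
    omega
  set t : ℕ := sSup L with htdef
  have htL : t ∈ L := Nat.sSup_mem ⟨1, h1L⟩ hbdd
  obtain ⟨w, f, hp⟩ := htL
  have hmaxle : ∀ n ∈ L, n ≤ t := fun n hn => le_csSup hbdd hn
  have ht1 : 1 ≤ t := hmaxle 1 h1L
  have htk : t < k := by
    by_contra hcontra
    push_neg at hcontra
    exact hfree ⟨w, f, hp.mono hcontra⟩
  have hmax : ∀ w' f', ¬ NPath H (t+1) w' f' := by
    intro w' f' hp'
    have := hmaxle (t+1) ⟨w', f', hp'⟩
    omega
  set W : Finset V := (range (t+1)).image w with hWdef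
  have hWS : W ⊆ S := by
    intro u hu
    obtain ⟨j, hj, rfl⟩ := mem_vset.mp hu
    rcases Nat.eq_zero_or_pos j with rfl | hj0
    · have h0 : w 0 ∈ f 1 := by
        have := hp.adj1 1 le_rfl ht1
        simpa using this
      exact hsub (f 1) (hp.fH 1 le_rfl ht1) h0
    · exact hsub (f j) (hp.fH j hj0 hj) (hp.adj2 j hj0 hj)
  have hdegW : ∀ v ∈ W, t + 10 ≤ (nbrs H v).card := by
    intro v hv
    have := hdeg v (hWS hv)
    omega
  set x : V := w t with hxdef
  have hxW : x ∈ W := mem_vset.mpr ⟨t, le_rfl, rfl⟩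
  -- the indices of used edges containing x
  set sIdx : Finset ℕ := (Icc 1 t).filter (fun i => x ∈ f i) with hsIdx
  have hts : t ∈ sIdx := mem_filter.mpr ⟨mem_Icc.mpr ⟨ht1, le_rfl⟩, hp.adj2 t ht1 le_rfl⟩
  set s' : ℕ := (sIdx.erase t).card with hs'def
  have hscard : sIdx.card = s' + 1 := (card_erase_add_one hts).symm
  have hsIdxle : ∀ i ∈ sIdx, 1 ≤ i ∧ i ≤ t ∧ x ∈ f i := by
    intro i hi
    obtain ⟨hIcc, hxf⟩ := mem_filter.mp hi
    rw [mem_Icc] at hIcc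
    exact ⟨hIcc.1, hIcc.2, hxf⟩
  -- neighbour sets of x
  set WN : Finset V := nbrs H x ∩ W with hWNdef
  set offN : Finset V := nbrs H x \ W with hoffNdef
  have hA : t + 10 ≤ (nbrs H x).card := hdegW x hxW
  have hAsplit : (nbrs H x).card ≤ WN.card + offN.card := by
    refine le_trans (card_le_card ?_) (card_union_le _ _)
    intro u hu
    by_cases huW : u ∈ W
    · exact mem_union_left _ (mem_inter.mpr ⟨hu, huW⟩)
    · exact mem_union_right _ (mem_sdiff.mpr ⟨hu, huW⟩)
  have hB : WN.card ≤ t := by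
    have hsubB : WN ⊆ W.erase x := by
      intro u hu
      obtain ⟨hu1, hu2⟩ := mem_inter.mp hu
      exact mem_erase.mpr ⟨(mem_nbrs.mp hu1).1, hu2⟩
    have := card_le_card hsubB
    have hce : (W.erase x).card = t := by
      rw [card_erase_of_mem hxW, card_vset hp]
      omega
    omega
  -- witnesses for x's neighbours: must be used edges
  have hwitx : ∀ u ∈ nbrs H x, (∃ i ∈ sIdx, u ∈ f i) ∨
      (∀ eu ∈ H, x ∈ eu → u ∈ eu → (∀ i, 1 ≤ i → i ≤ t → f i ≠ eu)) := by
    intro u hu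
    by_cases hc : ∃ i ∈ sIdx, u ∈ f i
    · exact Or.inl hc
    · push_neg at hc
      refine Or.inr ?_
      intro eu heu hxeu hueu i h1 h2 heq
      have hi : i ∈ sIdx := mem_filter.mpr ⟨mem_Icc.mpr ⟨h1, h2⟩, by rw [heq]; exact hxeu⟩
      exact hc i hi (by rw [heq]; exact hueu)
  have hoffwit : ∀ b ∈ offN, ∃ i ∈ sIdx, b ∈ f i := by
    intro b hb
    obtain ⟨hbn, hbW⟩ := mem_sdiff.mp hb
    rcases hwitx b hbn with h | h
    · exact h
    · exfalso
      obtain ⟨hbne, e, he, hxe, hbe⟩ := mem_nbrs.mp hbn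
      obtain ⟨j, hj, hwj⟩ := nonext hmax hp e he hxe (h e he hxe hbe) b hbe
      exact hbW (mem_vset.mpr ⟨j, hj, hwj⟩)
  -- off-neighbour counting
  have hoffsub : offN ⊆ (f t \ W) ∪ (sIdx.erase t).biUnion (fun i => f i \ W) := by
    intro b hb
    obtain ⟨i, hi, hbi⟩ := hoffwit b hb
    have hbW : b ∉ W := (mem_sdiff.mp hb).2
    rcases eq_or_ne i t with rfl | hne
    · exact mem_union_left _ (mem_sdiff.mpr ⟨hbi, hbW⟩)
    · exact mem_union_right _ (mem_biUnion.mpr ⟨i, mem_erase.mpr ⟨hne, hi⟩,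
        mem_sdiff.mpr ⟨hbi, hbW⟩⟩)
  have hft2 : (f t \ W).card ≤ 2 := by
    have hm1 : w (t-1) ∈ f t := hp.adj1 t ht1 le_rfl
    have hm2 : x ∈ f t := hp.adj2 t ht1 le_rfl
    have hne12 : w (t-1) ≠ x := by
      intro h
      have := hp.winj (t-1) (by omega) t le_rfl h
      omega
    have hpc := card_piece (E := f t) (W := W) (T := {w (t-1), x})
      (by intro a ha
          rcases mem_insert.mp ha with rfl | ha
          · exact mem_vset.mpr ⟨t-1, by omega, rfl⟩
          · rw [mem_singleton.mp ha]; exact hxW)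
      (by intro a ha
          rcases mem_insert.mp ha with rfl | ha
          · exact hm1
          · rw [mem_singleton.mp ha]; exact hm2)
    rw [card_pair _ _ hne12] at hpc
    have := hsz (f t) (hp.fH t ht1 le_rfl)
    omega
  -- per-edge capacities for non-last used edges
  have hag : ∀ i ∈ sIdx.erase t,
      (f i \ W).card + ((f i ∩ W) \ ({w (i-1), w i, x} : Finset V)).card ≤ 1 := by
    intro i hi
    obtain ⟨hine, hiI⟩ := mem_erase.mp hi
    obtain ⟨h1, h2, hxf⟩ := hsIdxle i hiI
    have hm1 : w (i-1) ∈ f i := hp.adj1 i h1 h2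
    have hm2 : w i ∈ f i := hp.adj2 i h1 h2
    have hd12 : w (i-1) ≠ w i := by
      intro h; have := hp.winj (i-1) (by omega) i (by omega) h; omega
    have hd13 : w (i-1) ≠ x := by
      intro h; have := hp.winj (i-1) (by omega) t le_rfl h; omega
    have hd23 : w i ≠ x := by
      intro h; have := hp.winj i (by omega) t le_rfl h; omega
    have hpc := card_three_pieces (E := f i) (W := W) (T := {w (i-1), w i, x})
      (by intro a ha
          rcases mem_insert.mp ha with rfl | ha
          · exact mem_vset.mpr ⟨i-1, by omega, rfl⟩
          rcases mem_insert.mp ha with rfl | ha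
          · exact mem_vset.mpr ⟨i, by omega, rfl⟩
          · rw [mem_singleton.mp ha]; exact hxW)
      (by intro a ha
          rcases mem_insert.mp ha with rfl | ha
          · exact hm1
          rcases mem_insert.mp ha with rfl | ha
          · exact hm2
          · rw [mem_singleton.mp ha]; exact hxf)
    rw [card_triple _ _ _ hd12 hd13 hd23] at hpc
    have := hsz (f i) (hp.fH i h1 h2)
    omega
  set SP : ℕ := ∑ i ∈ sIdx.erase t, (f i \ W).card with hSPdef
  set G : ℕ := ∑ i ∈ sIdx.erase t, ((f i ∩ W) \ ({w (i-1), w i, x} : Finset V)).card with hGdef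
  have hSPG : SP + G ≤ s' := by
    have h1 : ∑ i ∈ sIdx.erase t, ((f i \ W).card +
        ((f i ∩ W) \ ({w (i-1), w i, x} : Finset V)).card) ≤ ∑ _i ∈ sIdx.erase t, 1 :=
      sum_le_sum hag
    rw [Finset.sum_add_distrib] at h1
    simpa using h1
  have hC : offN.card ≤ 2 + SP := by
    have h1 : offN.card ≤ (f t \ W).card +
        ((sIdx.erase t).biUnion (fun i => f i \ W)).card :=
      le_trans (card_le_card hoffsub) (card_union_le _ _)
    have h2 : ((sIdx.erase t).biUnion (fun i => f i \ W)).card ≤ SP := card_biUnion_le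
    omega
  -- covered W-neighbours
  set usedCov : Finset V := sIdx.biUnion (fun i => (f i ∩ W).erase x) with husedCov
  have hU : usedCov.card ≤ 3 + (2 * s' + G) := by
    have h1 : usedCov.card ≤ ∑ i ∈ sIdx, ((f i ∩ W).erase x).card := card_biUnion_le
    have h2 : ∑ i ∈ sIdx, ((f i ∩ W).erase x).card
        = ((f t ∩ W).erase x).card + ∑ i ∈ sIdx.erase t, ((f i ∩ W).erase x).card :=
      (Finset.add_sum_erase sIdx _ hts).symm
    have h3 : ((f t ∩ W).erase x).card ≤ 3 := by
      have hsub3 : (f t ∩ W).erase x ⊆ (f t).erase x := by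
        intro a ha
        obtain ⟨hane, hai⟩ := mem_erase.mp ha
        exact mem_erase.mpr ⟨hane, (mem_inter.mp hai).1⟩
      have h4 := card_le_card hsub3
      have h5 : ((f t).erase x).card = (f t).card - 1 :=
        card_erase_of_mem (hp.adj2 t ht1 le_rfl)
      have := hsz (f t) (hp.fH t ht1 le_rfl)
      omega
    have h6 : ∀ i ∈ sIdx.erase t, ((f i ∩ W).erase x).card
        ≤ 2 + ((f i ∩ W) \ ({w (i-1), w i, x} : Finset V)).card := by
      intro i hi
      have hsub6 : (f i ∩ W).erase x ⊆
          insert (w (i-1)) (insert (w i) ((f i ∩ W) \ ({w (i-1), w i, x} : Finset V))) := by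
        intro a ha
        obtain ⟨hane, hai⟩ := mem_erase.mp ha
        by_cases ha1 : a = w (i-1)
        · exact mem_insert.mpr (Or.inl ha1)
        by_cases ha2 : a = w i
        · exact mem_insert.mpr (Or.inr (mem_insert.mpr (Or.inl ha2)))
        · refine mem_insert.mpr (Or.inr (mem_insert.mpr (Or.inr ?_)))
          refine mem_sdiff.mpr ⟨hai, ?_⟩
          simp [ha1, ha2, hane]
      refine le_trans (card_le_card hsub6) ?_
      refine le_trans (card_insert_le _ _) ?_
      have := card_insert_le (w i) ((f i ∩ W) \ ({w (i-1), w i, x} : Finset V))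
      omega
    have h7 : ∑ i ∈ sIdx.erase t, ((f i ∩ W).erase x).card
        ≤ ∑ i ∈ sIdx.erase t, (2 + ((f i ∩ W) \ ({w (i-1), w i, x} : Finset V)).card) :=
      sum_le_sum h6
    have h8 : ∑ i ∈ sIdx.erase t, (2 + ((f i ∩ W) \ ({w (i-1), w i, x} : Finset V)).card)
        = 2 * s' + G := by
      rw [Finset.sum_add_distrib]
      simp [hs'def, mul_comm, hGdef]
    omega
  set freshCov : Finset V := WN \ usedCov with hfreshCov
  have hWNsplit : WN.card ≤ usedCov.card + freshCov.card := by
    refine le_trans (card_le_card ?_) (card_union_le _ _)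
    intro u hu
    by_cases huc : u ∈ usedCov
    · exact mem_union_left _ huc
    · exact mem_union_right _ (mem_sdiff.mpr ⟨hu, huc⟩)
  set QF : Finset ℕ := (range t).filter (fun q => w q ∈ freshCov) with hQFdef
  have hQFcard : freshCov.card ≤ QF.card := by
    have hsubQ : freshCov ⊆ QF.image w := by
      intro u hu
      have huWN : u ∈ WN := (mem_sdiff.mp hu).1
      have huW : u ∈ W := (mem_inter.mp huWN).2
      obtain ⟨q, hq, rfl⟩ := mem_vset.mp huW
      have hqt : q ≠ t := by
        intro h
        subst h
        exact (mem_nbrs.mp (mem_inter.mp huWN).1).1 rfl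
      exact mem_image.mpr ⟨q, mem_filter.mpr ⟨mem_range.mpr (by omega), hu⟩, rfl⟩
    exact le_trans (card_le_card hsubQ) card_image_le
  -- the set of reachable endpoints
  set M1end : Finset V := sIdx.image w with hM1def
  set M2end : Finset V := QF.image (fun q => w (q+1)) with hM2def
  set T1 : Finset V := M1end ∪ M2end with hT1def
  have hM1card : M1end.card = s' + 1 := by
    rw [hM1def, card_image_of_injOn, hscard]
    intro i hi j hj hij
    exact hp.winj i (hsIdxle i hi).2.1 j (hsIdxle j hj).2.1 hij
  have hM2card : QF.card = M2end.card := by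
    rw [hM2def, card_image_of_injOn]
    intro q hq q' hq' hqq
    have h1 : q < t := mem_range.mp (mem_filter.mp hq).1
    have h2 : q' < t := mem_range.mp (mem_filter.mp hq').1
    have := hp.winj (q+1) (by omega) (q'+1) (by omega) hqq
    omega
  have hT1a : s' + 1 ≤ T1.card := by
    rw [← hM1card]
    exact card_le_card subset_union_left
  have hT1b : QF.card ≤ T1.card := by
    rw [hM2card]
    exact card_le_card subset_union_right
  have hT1W : T1 ⊆ W := by
    intro y hy
    rcases mem_union.mp hy with hy | hy
    · obtain ⟨i, hi, rfl⟩ := mem_image.mp hy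
      exact mem_vset.mpr ⟨i, (hsIdxle i hi).2.1, rfl⟩
    · obtain ⟨q, hq, rfl⟩ := mem_image.mp hy
      have := mem_range.mp (mem_filter.mp hq).1
      exact mem_vset.mpr ⟨q+1, by omega, rfl⟩
  -- the D-sets
  set Dfun : V → Finset (Finset V) := fun y => ((Icc 1 t).image f).filter (fun E => y ∈ E ∧
      (E \ W).Nonempty ∧ ∀ i, 1 ≤ i → i ≤ t → E = f i → (y ≠ w (i-1) ∧ y ≠ w i)) with hDdef
  have hD5 : ∀ y ∈ T1, 5 ≤ (Dfun y).card := by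
    intro y hy
    rcases mem_union.mp hy with hy | hy
    · -- M1 rotations
      obtain ⟨i, hi, rfl⟩ := mem_image.mp hy
      obtain ⟨h1, h2, hxf⟩ := hsIdxle i hi
      obtain ⟨w', f', hp', hend, himg', hedge⟩ := c12 hp (i-1) (by omega) (f i)
        (hp.fH i h1 h2) hxf (by rw [show i - 1 = i - 1 from rfl]; exact hp.adj1 i h1 h2)
        (Or.inl (by rw [show i-1+1 = i by omega]))
      have hfam : (((Icc 1 t).image f') \ ((Icc 1 t).image f)).card ≤ 1 := by
        have hsubf : ((Icc 1 t).image f') \ ((Icc 1 t).image f) = ∅ := by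
          rw [sdiff_eq_empty_iff_subset]
          refine Subset.trans hedge ?_
          rw [insert_eq_self.mpr (mem_image.mpr ⟨i, mem_Icc.mpr ⟨h1, h2⟩, rfl⟩)]
        rw [hsubf]
        simp
      have hres := endpt hsz ht1 hmax hp hp' himg' hfam hdegW
      rw [hend, show i-1+1 = i by omega] at hres
      exact hres
    · -- M2 swaps
      obtain ⟨q, hq, rfl⟩ := mem_image.mp hy
      obtain ⟨hqr, hqf⟩ := mem_filter.mp hq
      have hqt : q < t := mem_range.mp hqr
      have hwqWN : w q ∈ WN := (mem_sdiff.mp hqf).1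
      have hwqnc : w q ∉ usedCov := (mem_sdiff.mp hqf).2
      obtain ⟨hwqx, e, he, hxe, hwqe⟩ := mem_nbrs.mp (mem_inter.mp hwqWN).1
      have hfresh : ∀ i, 1 ≤ i → i ≤ t → f i ≠ e := by
        intro i hi1 hi2 heq
        have hiS : i ∈ sIdx := mem_filter.mpr ⟨mem_Icc.mpr ⟨hi1, hi2⟩, by rw [heq]; exact hxe⟩
        refine hwqnc (mem_biUnion.mpr ⟨i, hiS, ?_⟩)
        refine mem_erase.mpr ⟨hwqx, mem_inter.mpr ⟨by rw [heq]; exact hwqe, ?_⟩⟩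
        exact mem_vset.mpr ⟨q, by omega, rfl⟩
      obtain ⟨w', f', hp', hend, himg', hedge⟩ := c12 hp q (by omega) e he hxe hwqe
        (Or.inr hfresh)
      have hfam : (((Icc 1 t).image f') \ ((Icc 1 t).image f)).card ≤ 1 := by
        have hsubf : ((Icc 1 t).image f') \ ((Icc 1 t).image f) ⊆ {e} := by
          intro E hE
          obtain ⟨hE1, hE2⟩ := mem_sdiff.mp hE
          rcases mem_insert.mp (hedge hE1) with rfl | hE3
          · exact mem_singleton_self _
          · exact absurd hE3 hE2
        exact le_trans (card_le_card hsubf) (by simp)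
      have hres := endpt hsz ht1 hmax hp hp' himg' hfam hdegW
      rw [hend] at hres
      exact hres
  -- D-sets are pairwise disjoint
  have hDdisj : ∀ y ∈ T1, ∀ y' ∈ T1, y ≠ y' → Disjoint (Dfun y) (Dfun y') := by
    intro y hy y' hy' hne
    refine disjoint_left.mpr ?_
    intro E hE hE'
    obtain ⟨hEim, hyE, hoff, hpair⟩ := (@mem_filter _ _ (fun _ => @instDecidableAnd _ _ _ (@instDecidableAnd _ _ _ (Classical.propDecidable _))) _ _).mp hE
    obtain ⟨-, hyE', -, hpair'⟩ := (@mem_filter _ _ (fun _ => @instDecidableAnd _ _ _ (@instDecidableAnd _ _ _ (Classical.propDecidable _))) _ _).mp hE'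
    obtain ⟨i, hiIcc, hfE⟩ := mem_image.mp hEim
    rw [mem_Icc] at hiIcc
    obtain ⟨h1, h2⟩ := hiIcc
    obtain ⟨hp1, hp2⟩ := hpair i h1 h2 hfE.symm
    obtain ⟨hp1', hp2'⟩ := hpair' i h1 h2 hfE.symm
    obtain ⟨c, hc⟩ := hoff
    obtain ⟨hcE, hcW⟩ := mem_sdiff.mp hc
    have hyW : y ∈ W := hT1W hy
    have hy'W : y' ∈ W := hT1W hy'
    have hwi1 : w (i-1) ∈ E := by rw [← hfE]; exact hp.adj1 i h1 h2
    have hwi2 : w i ∈ E := by rw [← hfE]; exact hp.adj2 i h1 h2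
    have hd12 : w (i-1) ≠ w i := by
      intro h; have := hp.winj (i-1) (by omega) i (by omega) h; omega
    have hcne1 : w (i-1) ≠ c := fun h => hcW (h ▸ mem_vset.mpr ⟨i-1, by omega, rfl⟩)
    have hcne2 : w i ≠ c := fun h => hcW (h ▸ mem_vset.mpr ⟨i, by omega, rfl⟩)
    have hcney : y ≠ c := fun h => hcW (h ▸ hyW)
    have hcney' : y' ≠ c := fun h => hcW (h ▸ hy'W)
    have hsub5 : ({w (i-1), w i, y, y', c} : Finset V) ⊆ E := by
      intro a ha
      rcases mem_insert.mp ha with rfl | ha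
      · exact hwi1
      rcases mem_insert.mp ha with rfl | ha
      · exact hwi2
      rcases mem_insert.mp ha with rfl | ha
      · exact hyE
      rcases mem_insert.mp ha with rfl | ha
      · exact hyE'
      · rw [mem_singleton.mp ha]; exact hcE
    have hcard5 : ({w (i-1), w i, y, y', c} : Finset V).card = 5 :=
      card_quint _ _ _ _ _ hd12 (Ne.symm hp1) (Ne.symm hp1') hcne1
        (Ne.symm hp2) (Ne.symm hp2') hcne2 hne hcney hcney'
    have h5le := card_le_card hsub5
    have hEcard : E.card ≤ 4 := by
      rw [← hfE]
      exact hsz (f i) (hp.fH i h1 h2)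
    omega
  -- the final count
  have hF0card : ((Icc 1 t).image f).card = t := by
    rw [card_image_of_injOn, Nat.card_Icc]
    · omega
    · intro i hi j hj hij
      rw [mem_coe, mem_Icc] at hi hj
      exact hp.finj i hi.1 hi.2 j hj.1 hj.2 hij
  have hcount : 5 * T1.card ≤ t := by
    have h1 : ∑ y ∈ T1, (5 : ℕ) ≤ ∑ y ∈ T1, (Dfun y).card := sum_le_sum hD5
    have h2 : ∑ y ∈ T1, (Dfun y).card = (T1.biUnion Dfun).card := (card_biUnion hDdisj).symm
    have h3 : (T1.biUnion Dfun).card ≤ ((Icc 1 t).image f).card := by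
      refine card_le_card ?_
      intro E hE
      obtain ⟨y, -, hEy⟩ := mem_biUnion.mp hE
      exact ((@mem_filter _ _ (fun _ => @instDecidableAnd _ _ _ (@instDecidableAnd _ _ _ (Classical.propDecidable _))) _ _).mp hEy).1
    have h4 : ∑ y ∈ T1, (5 : ℕ) = 5 * T1.card := by
      rw [sum_const, smul_eq_mul, mul_comm]
    omega
  omega

/-- Lift a path in the `S`-restricted hypergraph to a Berge path in `H`. -/
lemma liftPath {H : Finset (Finset V)} {S : Finset V} {k : ℕ}
    {w : ℕ → V} {f : ℕ → Finset V}
    (hp : NPath (H.image (· ∩ S)) k w f) : HasBergePath H k := by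
  have hch : ∀ i, ∃ E, 1 ≤ i → i ≤ k → E ∈ H ∧ E ∩ S = f i := by
    intro i
    by_cases h : 1 ≤ i ∧ i ≤ k
    · obtain ⟨E, hE, hEq⟩ := mem_image.mp (hp.fH i h.1 h.2)
      exact ⟨E, fun _ _ => ⟨hE, hEq⟩⟩
    · exact ⟨∅, fun h1 h2 => absurd ⟨h1, h2⟩ h⟩
  choose E hEprop using hch
  refine ⟨fun i => w i.val, ?_, fun i => E (i.val + 1), ?_, ?_⟩
  · intro i j hij
    exact Fin.ext (hp.winj i.val (by omega) j.val (by omega) hij)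
  · intro i j hij
    have hi := hEprop (i.val + 1) (by omega) (by omega)
    have hj := hEprop (j.val + 1) (by omega) (by omega)
    have hij' : E (i.val + 1) = E (j.val + 1) := hij
    have hfij : f (i.val + 1) = f (j.val + 1) := by
      rw [← hi.2, ← hj.2, hij']
    have := hp.finj (i.val + 1) (by omega) (by omega) (j.val + 1) (by omega) (by omega) hfij
    exact Fin.ext (by omega)
  · intro i
    have hi := hEprop (i.val + 1) (by omega) (by omega)
    refine ⟨hi.1, ?_, ?_⟩
    · have h1 : w ((i.val + 1) - 1) ∈ f (i.val + 1) := hp.adj1 (i.val + 1) (by omega) (by omega)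
      have h2 : w i.val ∈ E (i.val + 1) ∩ S := by
        rw [hi.2]
        simpa using h1
      simpa using (mem_inter.mp h2).1
    · have h1 : w (i.val + 1) ∈ f (i.val + 1) := hp.adj2 (i.val + 1) (by omega) (by omega)
      have h2 : w (i.val + 1) ∈ E (i.val + 1) ∩ S := by
        rw [hi.2]; exact h1
      simpa using (mem_inter.mp h2).1

/-- The partial colouring lemma: greedy colouring via the degeneracy provided by `core`. -/
lemma colouring [Fintype V] (H : Finset (Finset V)) (k : ℕ) (hk : 1 ≤ k)
    (hsize : ∀ e ∈ H, 2 ≤ e.card ∧ e.card ≤ 4)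
    (hfree : ¬ HasBergePath H k) :
    ∀ n (S : Finset V), S.card ≤ n →
      ∃ c : V → Fin (k+9), ∀ e ∈ H, ∀ u ∈ e ∩ S, ∀ u' ∈ e ∩ S, c u = c u' → u = u' := by
  intro n
  induction n with
  | zero =>
    intro S hS
    have hSe : S = ∅ := card_eq_zero.mp (Nat.le_zero.mp hS)
    subst hSe
    refine ⟨fun _ => ⟨0, by omega⟩, ?_⟩
    intro e _ u hu
    simp at hu
  | succ n ih =>
    intro S hS
    rcases S.eq_empty_or_nonempty with rfl | hSne
    · refine ⟨fun _ => ⟨0, by omega⟩, ?_⟩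
      intro e _ u hu
      simp at hu
    · set H' : Finset (Finset V) := H.image (· ∩ S) with hH'
      have hsz' : ∀ e ∈ H', e.card ≤ 4 := by
        intro e he
        obtain ⟨E, hE, rfl⟩ := mem_image.mp he
        exact le_trans (card_le_card inter_subset_left) (hsize E hE).2
      have hfree' : ¬ ∃ w f, NPath H' k w f := by
        rintro ⟨w, f, hp⟩
        exact hfree (liftPath hp)
      have hsub' : ∀ e ∈ H', e ⊆ S := by
        intro e he
        obtain ⟨E, hE, rfl⟩ := mem_image.mp he
        exact inter_subset_right
      obtain ⟨v, hvS, hvdeg⟩ := core H' k hk hsz' hfree' S hSne hsub'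
      obtain ⟨c₀, hc₀⟩ := ih (S.erase v) (by
        have h1 : (S.erase v).card = S.card - 1 := card_erase_of_mem hvS
        have h2 : 1 ≤ S.card := card_pos.mpr ⟨v, hvS⟩
        omega)
      have hcolor : ∃ χ : Fin (k+9), χ ∉ (nbrs H' v).image c₀ := by
        by_contra hcc
        push_neg at hcc
        have huniv : (univ : Finset (Fin (k+9))) ⊆ (nbrs H' v).image c₀ :=
          fun χ _ => hcc χ
        have h1 : (univ : Finset (Fin (k+9))).card = k + 9 := by simp
        have h2 := card_le_card huniv
        have h3 := card_image_le (f := c₀) (s := nbrs H' v)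
        omega
      obtain ⟨χ, hχ⟩ := hcolor
      refine ⟨Function.update c₀ v χ, ?_⟩
      intro e he u hu u' hu' hcu
      obtain ⟨hue, huS⟩ := mem_inter.mp hu
      obtain ⟨hue', huS'⟩ := mem_inter.mp hu'
      have heH' : e ∩ S ∈ H' := mem_image.mpr ⟨e, he, rfl⟩
      by_cases h1 : u = v <;> by_cases h2 : u' = v
      · rw [h1, h2]
      · exfalso
        subst h1
        have hnb : u' ∈ nbrs H' u := mem_nbrs.mpr ⟨h2, e ∩ S, heH',
          mem_inter.mpr ⟨hue, huS⟩, mem_inter.mpr ⟨hue', huS'⟩⟩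
        apply hχ
        refine mem_image.mpr ⟨u', hnb, ?_⟩
        rw [Function.update_of_ne h2] at hcu
        rw [← hcu, Function.update_self]
      · exfalso
        subst h2
        have hnb : u ∈ nbrs H' u' := mem_nbrs.mpr ⟨h1, e ∩ S, heH',
          mem_inter.mpr ⟨hue', huS'⟩, mem_inter.mpr ⟨hue, huS⟩⟩
        apply hχ
        refine mem_image.mpr ⟨u, hnb, ?_⟩
        rw [Function.update_of_ne h1] at hcu
        rw [hcu, Function.update_self]
      · rw [Function.update_of_ne h1, Function.update_of_ne h2] at hcu
        exact hc₀ e he u (mem_inter.mpr ⟨hue, mem_erase.mpr ⟨h1, huS⟩⟩)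
          u' (mem_inter.mpr ⟨hue', mem_erase.mpr ⟨h2, huS'⟩⟩) hcu

end Berge18

open Berge18 Finset in
/-- Let `H` be an at most 4-uniform hypergraph (hyperedges of size between 2 and 4) without a
Berge copy of the path `P_k` with `k` edges. Then `χ_s(H) ≤ k + 9`. -/
theorem stmt18 {V : Type*} [Fintype V] (k : ℕ)
    (H : Finset (Finset V)) (hsize : ∀ e ∈ H, 2 ≤ e.card ∧ e.card ≤ 4)
    (hfree : ¬ HasBergePath H k) :
    strongChrom H ≤ k + 9 := by
  classical
  have hkey : (k + 9) ∈ {m | ∃ c : V → Fin m, ∀ e ∈ H, Set.InjOn c (e : Set V)} := by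
    rcases Nat.eq_zero_or_pos k with rfl | hk
    · have hVempty : IsEmpty V := by
        by_contra h
        rw [not_isEmpty_iff] at h
        obtain ⟨v⟩ := h
        refine hfree ⟨fun _ => v, ?_, Fin.elim0, ?_, ?_⟩
        · intro a b _
          exact Fin.ext (by omega)
        · intro a
          exact a.elim0
        · intro a
          exact a.elim0
      exact ⟨fun v => (hVempty.false v).elim, fun e he u hu u' hu' h => (hVempty.false u).elim⟩
    · obtain ⟨c, hc⟩ := colouring H k hk hsize hfree (univ.card) univ le_rfl
      refine ⟨c, ?_⟩
      intro e he u hu u' hu' hcu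
      exact hc e he u (mem_inter.mpr ⟨hu, mem_univ _⟩) u' (mem_inter.mpr ⟨hu', mem_univ _⟩) hcu
  exact Nat.sInf_le hkey
end
end
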